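/- arXiv:1009.3694 — 7 statements merged into one kernel-verified Lean document; each statement's English description precedes it below -/
import Mathlib

section
/- For a Borel measure η on ℝ with ∫ 1/(1+y²) dη(y) < ∞, fix α ∈ [0,1] and x ∈ ℝ. Then the upper α-derivative D̄_η^α(x) = limsup_{ε→0⁺} η((x-ε,x+ε))/ε^α and the quantity limsup_{ε→0⁺} ε^{1-α} P_η(x+iε) are either both infinite, both zero, or both in (0,+∞). -/
/-!
At scale `ε` the Poisson kernel is at least `1 / (2ε)` on `(x - ε, x + ε)`, so
`η (x - ε, x + ε) / ε^α ≤ 2 ε^(1-α) P_η(x + iε)`. Conversely, suppose `η (x - s, x + s) ≤ M s^α`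
for all small `s`, and split `P_η(x + iε)` at a fixed radius `ρ`. Near `x` the kernel is dominated
by the dyadic sum `∑ₖ 4 / (4ᵏ ε) · 1{|y - x| < 2ᵏ ε}`, and since `α ≤ 1` the `k`-th term contributes
at most `4 M 2⁻ᵏ` to `ε^(1-α) P`, so the near part is at most `8 M`. Away from `x` the kernel is
`O(ε / (1 + y²))`, so by finiteness of the Poisson integral the far part of `ε^(1-α) P` is
`O(ε^(2-α))`. Hence each limsup is bounded by a constant multiple of the other.
-/

open MeasureTheory Set Filter

open scoped ENNReal Topology

lemma mem_Ioo_sub_add_iff_abs_sub_lt {x y r : ℝ} : y ∈ Ioo (x - r) (x + r) ↔ |y - x| < r := by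
  rw [← Real.ball_eq_Ioo, Metric.mem_ball, Real.dist_eq]

lemma inv_two_mul_le_poissonKernel {x y ε : ℝ} (hε : 0 < ε) (hy : |y - x| < ε) :
    1 / (2 * ε) ≤ ε / ((y - x) ^ 2 + ε ^ 2) := by
  rw [div_le_div_iff₀ (by positivity) (by positivity), ← sq_abs]
  nlinarith [abs_nonneg (y - x)]

lemma poissonKernel_le_four_div_of_two_pow_mul_le {x y ε : ℝ} (hε : 0 < ε) {m : ℕ}
    (h : 2 ^ m * ε ≤ |y - x|) :
    ε / ((y - x) ^ 2 + ε ^ 2) ≤ 4 / (4 ^ (m + 1) * ε) := by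
  have hsq : (2 ^ m * ε) ^ 2 ≤ (y - x) ^ 2 := by
    rw [← sq_abs (y - x)]; exact pow_le_pow_left₀ (by positivity) h 2
  have h4 : (4 : ℝ) ^ (m + 1) = 4 * (2 ^ m) ^ 2 := by
    rw [← pow_mul, pow_succ, mul_comm m, pow_mul]; norm_num; ring
  rw [div_le_div_iff₀ (by positivity) (by positivity), h4]
  nlinarith [mul_pos (pow_pos two_pos m) hε]

lemma poissonKernel_le_inv {x y ε : ℝ} (hε : 0 < ε) :
    ε / ((y - x) ^ 2 + ε ^ 2) ≤ 1 / ε := by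
  rw [div_le_div_iff₀ (by positivity) hε]
  nlinarith [sq_nonneg (y - x)]

lemma ofReal_poissonKernel_le_tsum_indicator (x y : ℝ) {ε : ℝ} (hε : 0 < ε) :
    ENNReal.ofReal (ε / ((y - x) ^ 2 + ε ^ 2)) ≤
      ∑' k : ℕ, (Ioo (x - 2 ^ k * ε) (x + 2 ^ k * ε)).indicator
        (fun _ => ENNReal.ofReal (4 / (4 ^ k * ε))) y := by
  suffices ∃ k : ℕ, |y - x| < 2 ^ k * ε ∧ ε / ((y - x) ^ 2 + ε ^ 2) ≤ 4 / (4 ^ k * ε) by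
    obtain ⟨k, hy, hk⟩ := this
    calc ENNReal.ofReal (ε / ((y - x) ^ 2 + ε ^ 2)) ≤ ENNReal.ofReal (4 / (4 ^ k * ε)) :=
          ENNReal.ofReal_le_ofReal hk
      _ = (Ioo (x - 2 ^ k * ε) (x + 2 ^ k * ε)).indicator
            (fun _ => ENNReal.ofReal (4 / (4 ^ k * ε))) y :=
          (indicator_of_mem (mem_Ioo_sub_add_iff_abs_sub_lt.2 hy) (fun _ => _)).symm
      _ ≤ _ := ENNReal.le_tsum k
  by_cases hnear : |y - x| < ε
  · refine ⟨0, by simpa using hnear, (poissonKernel_le_inv hε).trans ?_⟩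
    gcongr <;> norm_num
  · obtain ⟨m, hm, hm'⟩ := exists_nat_pow_near ((one_le_div hε).2 (not_lt.1 hnear)) one_lt_two
    rw [le_div_iff₀ hε] at hm
    rw [div_lt_iff₀ hε] at hm'
    exact ⟨m + 1, hm', poissonKernel_le_four_div_of_two_pow_mul_le hε hm⟩

noncomputable def poissonTransform (η : Measure ℝ) (x ε : ℝ) : ℝ≥0∞ :=
  ∫⁻ y, ENNReal.ofReal (ε / ((y - x) ^ 2 + ε ^ 2)) ∂η

lemma measure_Ioo_le_ofReal_two_mul_poissonTransform (η : Measure ℝ) (x : ℝ) {ε : ℝ}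
    (hε : 0 < ε) :
    η (Ioo (x - ε) (x + ε)) ≤ ENNReal.ofReal (2 * ε) * poissonTransform η x ε := by
  have hP : ENNReal.ofReal (1 / (2 * ε)) * η (Ioo (x - ε) (x + ε)) ≤ poissonTransform η x ε := by
    rw [← lintegral_indicator_const measurableSet_Ioo]
    refine lintegral_mono fun y => ?_
    by_cases hy : y ∈ Ioo (x - ε) (x + ε)
    · rw [indicator_of_mem hy]
      exact ENNReal.ofReal_le_ofReal
        (inv_two_mul_le_poissonKernel hε (mem_Ioo_sub_add_iff_abs_sub_lt.1 hy))
    · rw [indicator_of_notMem hy]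
      exact zero_le
  calc η (Ioo (x - ε) (x + ε))
      = ENNReal.ofReal (2 * ε) * (ENNReal.ofReal (1 / (2 * ε)) * η (Ioo (x - ε) (x + ε))) := by
        rw [← mul_assoc, ← ENNReal.ofReal_mul (by positivity), mul_one_div_cancel (by positivity),
          ENNReal.ofReal_one, one_mul]
    _ ≤ ENNReal.ofReal (2 * ε) * poissonTransform η x ε := by gcongr

lemma measure_Ioo_div_rpow_le (η : Measure ℝ) (x α : ℝ) {ε : ℝ} (hε : 0 < ε) :
    η (Ioo (x - ε) (x + ε)) / ENNReal.ofReal (ε ^ α) ≤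
      2 * (ENNReal.ofReal (ε ^ (1 - α)) * poissonTransform η x ε) := by
  have hεα : 0 < ε ^ α := Real.rpow_pos_of_pos hε α
  have h2ε : ENNReal.ofReal (2 * ε) =
      2 * ENNReal.ofReal (ε ^ (1 - α)) * ENNReal.ofReal (ε ^ α) := by
    rw [← ENNReal.ofReal_ofNat, ← ENNReal.ofReal_mul zero_le_two,
      ← ENNReal.ofReal_mul (by positivity), mul_assoc, ← Real.rpow_add hε, sub_add_cancel,
      Real.rpow_one]
  rw [ENNReal.div_le_iff (by simpa using hεα) ENNReal.ofReal_ne_top]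
  calc η (Ioo (x - ε) (x + ε)) ≤ ENNReal.ofReal (2 * ε) * poissonTransform η x ε :=
        measure_Ioo_le_ofReal_two_mul_poissonTransform η x hε
    _ = _ := by rw [h2ε]; ring

lemma rpow_one_sub_mul_four_div_mul_rpow_le {α ε : ℝ} (hα : α ≤ 1) (hε : 0 < ε) (k : ℕ) :
    ε ^ (1 - α) * (4 / (4 ^ k * ε)) * (2 ^ k * ε) ^ α ≤ 4 * 2⁻¹ ^ k := by
  have h2k : ((2 : ℝ) ^ k) ^ α ≤ 2 ^ k := by
    simpa using Real.rpow_le_rpow_of_exponent_le (one_le_pow₀ one_le_two) hα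
  have hε1 : ε ^ (1 - α) * ε ^ α = ε := by rw [← Real.rpow_add hε, sub_add_cancel, Real.rpow_one]
  have h4 : (4 : ℝ) ^ k = 2 ^ k * 2 ^ k := by rw [← mul_pow]; norm_num
  calc ε ^ (1 - α) * (4 / (4 ^ k * ε)) * (2 ^ k * ε) ^ α
      = 4 / (4 ^ k * ε) * ((2 ^ k) ^ α * (ε ^ (1 - α) * ε ^ α)) := by
        rw [Real.mul_rpow (by positivity) hε.le]; ring
    _ ≤ 4 / (4 ^ k * ε) * (2 ^ k * ε) := by rw [hε1]; gcongr
    _ = 4 * 2⁻¹ ^ k := by rw [h4, inv_pow]; field_simp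

lemma poissonTransform_le_tsum (ν : Measure ℝ) (x : ℝ) {ε : ℝ} (hε : 0 < ε) :
    poissonTransform ν x ε ≤
      ∑' k : ℕ, ENNReal.ofReal (4 / (4 ^ k * ε)) * ν (Ioo (x - 2 ^ k * ε) (x + 2 ^ k * ε)) := by
  calc poissonTransform ν x ε
      ≤ ∫⁻ y, ∑' k : ℕ, (Ioo (x - 2 ^ k * ε) (x + 2 ^ k * ε)).indicator
          (fun _ => ENNReal.ofReal (4 / (4 ^ k * ε))) y ∂ν :=
        lintegral_mono fun y => ofReal_poissonKernel_le_tsum_indicator x y hε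
    _ = _ := by
        rw [lintegral_tsum fun k => (measurable_const.indicator measurableSet_Ioo).aemeasurable]
        exact tsum_congr fun k => lintegral_indicator_const measurableSet_Ioo _

lemma rpow_one_sub_mul_poissonTransform_le_of_measure_Ioo_le (ν : Measure ℝ) (x : ℝ) {α : ℝ}
    (hα : α ≤ 1) {M : ℝ≥0∞}
    (hν : ∀ s, 0 < s → ν (Ioo (x - s) (x + s)) ≤ M * ENNReal.ofReal (s ^ α)) {ε : ℝ}
    (hε : 0 < ε) :
    ENNReal.ofReal (ε ^ (1 - α)) * poissonTransform ν x ε ≤ 8 * M := by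
  have hterm : ∀ k : ℕ, ENNReal.ofReal (ε ^ (1 - α)) * (ENNReal.ofReal (4 / (4 ^ k * ε)) *
      ν (Ioo (x - 2 ^ k * ε) (x + 2 ^ k * ε))) ≤ M * (4 * 2⁻¹ ^ k) := fun k => by
    calc ENNReal.ofReal (ε ^ (1 - α)) * (ENNReal.ofReal (4 / (4 ^ k * ε)) *
          ν (Ioo (x - 2 ^ k * ε) (x + 2 ^ k * ε)))
        ≤ ENNReal.ofReal (ε ^ (1 - α)) * (ENNReal.ofReal (4 / (4 ^ k * ε)) *
          (M * ENNReal.ofReal ((2 ^ k * ε) ^ α))) := by gcongr; exact hν _ (by positivity)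
      _ = M * ENNReal.ofReal (ε ^ (1 - α) * (4 / (4 ^ k * ε)) * (2 ^ k * ε) ^ α) := by
        rw [ENNReal.ofReal_mul (by positivity), ENNReal.ofReal_mul (by positivity)]; ring
      _ ≤ M * ENNReal.ofReal (4 * 2⁻¹ ^ k) := by
        gcongr M * ENNReal.ofReal ?_; exact rpow_one_sub_mul_four_div_mul_rpow_le hα hε k
      _ = M * (4 * 2⁻¹ ^ k) := by
        rw [ENNReal.ofReal_mul zero_le_four, ENNReal.ofReal_pow (by norm_num),
          ENNReal.ofReal_inv_of_pos two_pos, ENNReal.ofReal_ofNat, ENNReal.ofReal_ofNat]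
  calc ENNReal.ofReal (ε ^ (1 - α)) * poissonTransform ν x ε
      ≤ ∑' k : ℕ, ENNReal.ofReal (ε ^ (1 - α)) * (ENNReal.ofReal (4 / (4 ^ k * ε)) *
          ν (Ioo (x - 2 ^ k * ε) (x + 2 ^ k * ε))) := by
        rw [ENNReal.tsum_mul_left]; gcongr; exact poissonTransform_le_tsum ν x hε
    _ ≤ ∑' k : ℕ, M * (4 * 2⁻¹ ^ k) := ENNReal.tsum_le_tsum hterm
    _ = 8 * M := by
        rw [ENNReal.tsum_mul_left, ENNReal.tsum_mul_left, ENNReal.tsum_geometric_two]; ring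

lemma one_add_sq_le_mul_sq_sub {x y ρ : ℝ} (hρ : 0 < ρ) (hy : ρ ≤ |y - x|) :
    1 + y ^ 2 ≤ ((1 + 2 * x ^ 2) / ρ ^ 2 + 2) * (y - x) ^ 2 := by
  have hsq : ρ ^ 2 ≤ (y - x) ^ 2 := by
    rw [← sq_abs (y - x)]; exact pow_le_pow_left₀ hρ.le hy 2
  have h1 : 1 + 2 * x ^ 2 ≤ (1 + 2 * x ^ 2) / ρ ^ 2 * (y - x) ^ 2 := by
    rw [div_mul_eq_mul_div, le_div_iff₀ (by positivity)]
    nlinarith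
  have hy2 : y ^ 2 ≤ 2 * x ^ 2 + 2 * (y - x) ^ 2 := by nlinarith [sq_nonneg (y - 2 * x)]
  linarith

lemma poissonKernel_le_mul_inv_one_add_sq {x y ρ ε : ℝ} (hρ : 0 < ρ) (hε : 0 < ε)
    (hy : ρ ≤ |y - x|) :
    ε / ((y - x) ^ 2 + ε ^ 2) ≤ ε * ((1 + 2 * x ^ 2) / ρ ^ 2 + 2) * (1 / (1 + y ^ 2)) := by
  have hyx : 0 < (y - x) ^ 2 := by
    rw [← sq_abs]; exact pow_pos (hρ.trans_le hy) 2
  calc ε / ((y - x) ^ 2 + ε ^ 2) ≤ ε / (y - x) ^ 2 := by gcongr; nlinarith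
    _ ≤ ε * ((1 + 2 * x ^ 2) / ρ ^ 2 + 2) * (1 / (1 + y ^ 2)) := by
      rw [mul_one_div, div_le_div_iff₀ hyx (by positivity), mul_assoc]
      gcongr
      exact one_add_sq_le_mul_sq_sub hρ hy

lemma setLIntegral_compl_Ioo_poissonKernel_le (η : Measure ℝ) (x : ℝ) {ρ ε : ℝ} (hρ : 0 < ρ)
    (hε : 0 < ε) :
    ∫⁻ y in (Ioo (x - ρ) (x + ρ))ᶜ, ENNReal.ofReal (ε / ((y - x) ^ 2 + ε ^ 2)) ∂η ≤
      ENNReal.ofReal (ε * ((1 + 2 * x ^ 2) / ρ ^ 2 + 2)) *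
        ∫⁻ y, ENNReal.ofReal (1 / (1 + y ^ 2)) ∂η := by
  calc ∫⁻ y in (Ioo (x - ρ) (x + ρ))ᶜ, ENNReal.ofReal (ε / ((y - x) ^ 2 + ε ^ 2)) ∂η
      ≤ ∫⁻ y in (Ioo (x - ρ) (x + ρ))ᶜ, ENNReal.ofReal (ε * ((1 + 2 * x ^ 2) / ρ ^ 2 + 2)) *
          ENNReal.ofReal (1 / (1 + y ^ 2)) ∂η := by
        refine setLIntegral_mono (by fun_prop) fun y hy => ?_
        rw [← ENNReal.ofReal_mul (by positivity)]
        refine ENNReal.ofReal_le_ofReal (poissonKernel_le_mul_inv_one_add_sq hρ hε ?_)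
        rwa [mem_compl_iff, mem_Ioo_sub_add_iff_abs_sub_lt, not_lt] at hy
    _ ≤ ∫⁻ y, ENNReal.ofReal (ε * ((1 + 2 * x ^ 2) / ρ ^ 2 + 2)) *
          ENNReal.ofReal (1 / (1 + y ^ 2)) ∂η := setLIntegral_le_lintegral _ _
    _ = _ := lintegral_const_mul _ (by fun_prop)

lemma measure_restrict_Ioo_le_of_measure_Ioo_le (η : Measure ℝ) (x : ℝ) {α ρ : ℝ} (hα : 0 ≤ α)
    (hρ : 0 < ρ) {M : ℝ≥0∞}
    (hM : ∀ s, 0 < s → s ≤ ρ → η (Ioo (x - s) (x + s)) ≤ M * ENNReal.ofReal (s ^ α))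
    {s : ℝ} (hs : 0 < s) :
    η.restrict (Ioo (x - ρ) (x + ρ)) (Ioo (x - s) (x + s)) ≤ M * ENNReal.ofReal (s ^ α) := by
  have hmin : 0 < min s ρ := lt_min hs hρ
  calc η.restrict (Ioo (x - ρ) (x + ρ)) (Ioo (x - s) (x + s))
      = η (Ioo (x - s) (x + s) ∩ Ioo (x - ρ) (x + ρ)) := Measure.restrict_apply measurableSet_Ioo
    _ ≤ η (Ioo (x - min s ρ) (x + min s ρ)) := measure_mono fun y hy => by
        simp only [mem_inter_iff, mem_Ioo_sub_add_iff_abs_sub_lt, lt_min_iff] at hy ⊢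
        exact hy
    _ ≤ M * ENNReal.ofReal (min s ρ ^ α) := hM _ hmin (min_le_right _ _)
    _ ≤ M * ENNReal.ofReal (s ^ α) := by gcongr; exact min_le_left _ _

lemma rpow_one_sub_mul_poissonTransform_le (η : Measure ℝ) (x : ℝ) {α : ℝ} (hα : α ∈ Icc 0 1)
    {M : ℝ≥0∞} {ρ : ℝ} (hρ : 0 < ρ)
    (hM : ∀ s, 0 < s → s ≤ ρ → η (Ioo (x - s) (x + s)) ≤ M * ENNReal.ofReal (s ^ α))
    {ε : ℝ} (hε : 0 < ε) :
    ENNReal.ofReal (ε ^ (1 - α)) * poissonTransform η x ε ≤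
      8 * M + ENNReal.ofReal (ε ^ (2 - α) * ((1 + 2 * x ^ 2) / ρ ^ 2 + 2)) *
        ∫⁻ y, ENNReal.ofReal (1 / (1 + y ^ 2)) ∂η := by
  have hεα : ε ^ (1 - α) * ε = ε ^ (2 - α) := by
    rw [← Real.rpow_add_one hε.ne']; ring_nf
  rw [poissonTransform, ← lintegral_add_compl _ (measurableSet_Ioo (a := x - ρ) (b := x + ρ)),
    mul_add]
  refine add_le_add ?_ ?_
  · exact rpow_one_sub_mul_poissonTransform_le_of_measure_Ioo_le _ x hα.2
      (fun s hs => measure_restrict_Ioo_le_of_measure_Ioo_le η x hα.1 hρ hM hs) hε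
  · calc ENNReal.ofReal (ε ^ (1 - α)) *
          ∫⁻ y in (Ioo (x - ρ) (x + ρ))ᶜ, ENNReal.ofReal (ε / ((y - x) ^ 2 + ε ^ 2)) ∂η
        ≤ ENNReal.ofReal (ε ^ (1 - α)) * (ENNReal.ofReal (ε * ((1 + 2 * x ^ 2) / ρ ^ 2 + 2)) *
            ∫⁻ y, ENNReal.ofReal (1 / (1 + y ^ 2)) ∂η) := by
          gcongr; exact setLIntegral_compl_Ioo_poissonKernel_le η x hρ hε
      _ = _ := by
          rw [← mul_assoc, ← ENNReal.ofReal_mul (by positivity), ← mul_assoc, hεα]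

lemma tendsto_ofReal_rpow_mul_nhdsGT_zero {β : ℝ} (hβ : 0 < β) (C : ℝ) {T : ℝ≥0∞}
    (hT : T ≠ ⊤) :
    Tendsto (fun ε : ℝ => ENNReal.ofReal (ε ^ β * C) * T) (𝓝[>] 0) (𝓝 0) := by
  have hrpow : Tendsto (fun ε : ℝ => ε ^ β) (𝓝[>] 0) (𝓝 0) := by
    simpa [Real.zero_rpow hβ.ne'] using
      (Real.continuousAt_rpow_const 0 β (Or.inr hβ.le)).tendsto.mono_left nhdsWithin_le_nhds
  have := ENNReal.Tendsto.mul_const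
    (ENNReal.tendsto_ofReal (by simpa using hrpow.mul_const C)) (Or.inr hT)
  rwa [ENNReal.ofReal_zero, zero_mul] at this

lemma ENNReal.limsup_le_mul_limsup_of_forall {ι : Type*} {f : Filter ι} {u v : ι → ℝ≥0∞}
    {c : ℝ≥0∞} (hc0 : c ≠ 0) (hc : c ≠ ⊤)
    (h : ∀ M, (∀ᶠ i in f, u i ≤ M) → limsup v f ≤ c * M) :
    limsup v f ≤ c * limsup u f := by
  rw [← ENNReal.div_le_iff' hc0 hc]
  refine le_of_forall_gt_imp_ge_of_dense fun M hM => ENNReal.div_le_of_le_mul' ?_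
  exact h M ((eventually_lt_of_limsup_lt hM).mono fun _ => le_of_lt)

lemma ENNReal.eq_top_iff_and_eq_zero_iff_of_le_mul {a b c d : ℝ≥0∞} (hc : c ≠ ⊤) (hd : d ≠ ⊤)
    (hab : a ≤ c * b) (hba : b ≤ d * a) : (a = ⊤ ↔ b = ⊤) ∧ (a = 0 ↔ b = 0) := by
  refine ⟨⟨fun ha => ?_, fun hb => ?_⟩, ⟨fun ha => ?_, fun hb => ?_⟩⟩
  · by_contra hb
    exact ne_top_of_le_ne_top (ENNReal.mul_ne_top hc hb) hab ha
  · by_contra ha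
    exact ne_top_of_le_ne_top (ENNReal.mul_ne_top hd ha) hba hb
  · simpa [ha] using hba
  · simpa [hb] using hab

lemma limsup_rpow_one_sub_mul_poissonTransform_le (η : Measure ℝ)
    (hη : ∫⁻ y, ENNReal.ofReal (1 / (1 + y ^ 2)) ∂η < ⊤) (x : ℝ) {α : ℝ} (hα : α ∈ Icc 0 1)
    {M : ℝ≥0∞}
    (hM : ∀ᶠ ε in 𝓝[>] 0, η (Ioo (x - ε) (x + ε)) / ENNReal.ofReal (ε ^ α) ≤ M) :
    limsup (fun ε => ENNReal.ofReal (ε ^ (1 - α)) * poissonTransform η x ε) (𝓝[>] 0) ≤ 8 * M := by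
  obtain ⟨ρ, hρ, hsub⟩ := mem_nhdsGT_iff_exists_Ioo_subset.1 hM
  have hρ' : 0 < ρ / 2 := half_pos hρ
  have hgrowth : ∀ s, 0 < s → s ≤ ρ / 2 →
      η (Ioo (x - s) (x + s)) ≤ M * ENNReal.ofReal (s ^ α) := fun s hs hsρ => by
    have : η (Ioo (x - s) (x + s)) / ENNReal.ofReal (s ^ α) ≤ M := hsub ⟨hs, by linarith⟩
    rwa [ENNReal.div_le_iff (by simpa using Real.rpow_pos_of_pos hs α)
      ENNReal.ofReal_ne_top] at this
  have hlim : Tendsto (fun ε : ℝ => 8 * M + ENNReal.ofReal (ε ^ (2 - α) *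
      ((1 + 2 * x ^ 2) / (ρ / 2) ^ 2 + 2)) * ∫⁻ y, ENNReal.ofReal (1 / (1 + y ^ 2)) ∂η)
      (𝓝[>] 0) (𝓝 (8 * M)) := by
    simpa using tendsto_const_nhds.add
      (tendsto_ofReal_rpow_mul_nhdsGT_zero (by linarith [hα.2]) _ hη.ne)
  rw [← hlim.limsup_eq]
  exact limsup_le_limsup (eventually_nhdsWithin_of_forall fun ε hε =>
    rpow_one_sub_mul_poissonTransform_le η x hα hρ' hgrowth hε)

theorem stmt_1 (η : Measure ℝ)
    (hη : ∫⁻ y, ENNReal.ofReal (1 / (1 + y ^ 2)) ∂η < ⊤)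
    (α : ℝ) (hα : α ∈ Set.Icc (0 : ℝ) 1) (x : ℝ) :
    (Filter.limsup (fun ε : ℝ => η (Set.Ioo (x - ε) (x + ε)) / ENNReal.ofReal (ε ^ α))
        (nhdsWithin 0 (Set.Ioi 0)) = ⊤ ↔
      Filter.limsup (fun ε : ℝ =>
          ENNReal.ofReal (ε ^ (1 - α)) *
            ∫⁻ y, ENNReal.ofReal (ε / ((y - x) ^ 2 + ε ^ 2)) ∂η)
        (nhdsWithin 0 (Set.Ioi 0)) = ⊤) ∧
    (Filter.limsup (fun ε : ℝ => η (Set.Ioo (x - ε) (x + ε)) / ENNReal.ofReal (ε ^ α))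
        (nhdsWithin 0 (Set.Ioi 0)) = 0 ↔
      Filter.limsup (fun ε : ℝ =>
          ENNReal.ofReal (ε ^ (1 - α)) *
            ∫⁻ y, ENNReal.ofReal (ε / ((y - x) ^ 2 + ε ^ 2)) ∂η)
        (nhdsWithin 0 (Set.Ioi 0)) = 0) := by
  have hlower : limsup (fun ε : ℝ => η (Ioo (x - ε) (x + ε)) / ENNReal.ofReal (ε ^ α)) (𝓝[>] 0)
      ≤ 2 * limsup (fun ε => ENNReal.ofReal (ε ^ (1 - α)) * poissonTransform η x ε) (𝓝[>] 0) := by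
    rw [← ENNReal.limsup_const_mul_of_ne_top ENNReal.ofNat_ne_top]
    exact limsup_le_limsup (eventually_nhdsWithin_of_forall fun ε hε =>
      measure_Ioo_div_rpow_le η x α hε)
  have hupper := ENNReal.limsup_le_mul_limsup_of_forall (by norm_num) (by norm_num)
    fun M hM => limsup_rpow_one_sub_mul_poissonTransform_le η hη x hα hM
  exact ENNReal.eq_top_iff_and_eq_zero_iff_of_le_mul ENNReal.ofNat_ne_top ENNReal.ofNat_ne_top
    hlower hupper
end

section
/- Let A be a bounded self-adjoint operator, φ a unit vector, A_λ = A + λ⟨φ,·⟩φ with spectral measures μ_λ, and ν a σ-finite Borel measure on ℝ. If ν has no atoms, then the measure κ(B) := ∫ μ_λ(B) dν(λ) has no atoms. -/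
open MeasureTheory Set
open scoped RealInnerProductSpace

open Polynomial Filter Topology

/-!
If `μ_λ` charges `{x}`, the vectors `ψₙ = b(A_λ)ⁿ φ`, for a polynomial `b` that equals `1` only at
`x` and takes values in `[0, 1]` on the (bounded) support of `μ_λ`, are approximate eigenvectors:
by dominated convergence in the moment identities, `(A_λ - x) ψₙ → 0` while
`⟪φ, ψₙ⟫ → μ_λ {x} ≠ 0`. If also `μ_λ'` charges `{x}`, with approximate eigenvectors `ψ'ₙ`, then
self-adjointness gives `(λ - λ') ⟪φ, ψₙ⟫ ⟪φ, ψ'ₙ⟫ = ⟪ψ'ₙ, (A_λ - x) ψₙ⟫ - ⟪ψₙ, (A_λ' - x) ψ'ₙ⟫ → 0`,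
so `λ = λ'`. Hence `{λ | μ_λ {x} ≠ 0}` has at most one point, and `ν` has no atoms.
-/

theorem IsSelfAdjoint.aeval {R A : Type*} [CommSemiring R] [StarRing R] [TrivialStar R]
    [Semiring A] [StarRing A] [Algebra R A] [StarModule R A] {a : A} (ha : IsSelfAdjoint a)
    (p : R[X]) : IsSelfAdjoint (aeval a p) := by
  rw [aeval_eq_sum_range]
  exact isSelfAdjoint_sum _ fun i _ => (IsSelfAdjoint.all _).smul (ha.pow i)

theorem tendsto_integral_mul_pow_of_mem_Icc {α : Type*} [MeasurableSpace α] {μ : Measure α}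
    {f g : α → ℝ} (hf : Measurable f) (hg : Integrable g μ)
    (hf_Icc : ∀ᵐ a ∂μ, f a ∈ Icc 0 1) :
    Tendsto (fun n : ℕ => ∫ a, g a * f a ^ n ∂μ) atTop (𝓝 (∫ a in {a | f a = 1}, g a ∂μ)) := by
  rw [← integral_indicator (s := {a | f a = 1}) (hf (measurableSet_singleton 1))]
  refine tendsto_integral_of_dominated_convergence (fun a => ‖g a‖)
    (fun n => hg.aestronglyMeasurable.mul (hf.pow_const n).aestronglyMeasurable) hg.norm
    (fun n => ?_) ?_
  · filter_upwards [hf_Icc] with a ⟨h0, h1⟩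
    rw [norm_mul, norm_pow, Real.norm_of_nonneg h0]
    exact mul_le_of_le_one_right (norm_nonneg _) (pow_le_one₀ h0 h1)
  · filter_upwards [hf_Icc] with a ⟨h0, h1⟩
    by_cases ha : f a = 1
    · simp [ha]
    · rw [indicator_of_notMem (show a ∉ {a | f a = 1} from ha)]
      simpa using (tendsto_pow_atTop_nhds_zero_of_lt_one h0 (lt_of_le_of_ne h1 ha)).const_mul (g a)

theorem tendsto_inner_zero_of_norm_le {H : Type*} [NormedAddCommGroup H] [InnerProductSpace ℝ H]
    {u v : ℕ → H} {C : ℝ} (hu : ∀ n, ‖u n‖ ≤ C) (hv : Tendsto v atTop (𝓝 0)) :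
    Tendsto (fun n => ⟪u n, v n⟫) atTop (𝓝 0) := by
  refine squeeze_zero_norm (fun n => ?_) (by simpa using (tendsto_norm_zero.comp hv).const_mul C)
  exact (norm_inner_le_norm _ _).trans (mul_le_mul_of_nonneg_right (hu n) (norm_nonneg _))

theorem exists_polynomial_eval_eq_one_iff_and_mem_Icc (x r : ℝ) :
    ∃ b : ℝ[X], (∀ t, b.eval t = 1 ↔ t = x) ∧ ∀ t, |t| ≤ r → b.eval t ∈ Icc 0 1 := by
  set c := |r| + |x| + 1
  refine ⟨1 - C (c ^ 2)⁻¹ * (X - C x) ^ 2, fun t => ?_, fun t ht => ?_⟩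
  · have hc : 0 < c := by positivity
    simp [sub_eq_zero, hc.ne']
  · have hdist : |t - x| ≤ c := by
      have := abs_sub t x; have := le_abs_self r; linarith
    have : (t - x) ^ 2 ≤ c ^ 2 := sq_le_sq' (abs_le.mp hdist).1 (abs_le.mp hdist).2
    have hc : (c ^ 2)⁻¹ * (t - x) ^ 2 ≤ 1 := by
      rw [inv_mul_le_iff₀ (by positivity)]; linarith
    simp only [eval_sub, eval_one, eval_mul, eval_C, eval_pow, eval_X]
    constructor <;> nlinarith [mul_nonneg (inv_nonneg.mpr (sq_nonneg c)) (sq_nonneg (t - x))]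

-- A compactly supported measure is determined by its moments, so this pins down the spectral
-- measure of a bounded self-adjoint `T` at `φ`.
def IsSpectralMeasure {H : Type*} [NormedAddCommGroup H] [InnerProductSpace ℝ H]
    (T : H →L[ℝ] H) (φ : H) (μ : Measure ℝ) : Prop :=
  ∀ n : ℕ, Integrable (fun t : ℝ => t ^ n) μ ∧ ⟪φ, (T ^ n) φ⟫ = ∫ t, t ^ n ∂μ

namespace IsSpectralMeasure

variable {H : Type*} [NormedAddCommGroup H] [InnerProductSpace ℝ H]
  {T : H →L[ℝ] H} {φ : H} {μ : Measure ℝ}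

theorem isFiniteMeasure (h : IsSpectralMeasure T φ μ) : IsFiniteMeasure μ :=
  (integrable_const_iff_isFiniteMeasure one_ne_zero).mp (by simpa using (h 0).1)

theorem measureReal_univ (h : IsSpectralMeasure T φ μ) : μ.real univ = ‖φ‖ ^ 2 := by
  simpa [real_inner_self_eq_norm_sq, eq_comm] using (h 0).2

theorem integrable_eval (h : IsSpectralMeasure T φ μ) (p : ℝ[X]) :
    Integrable (fun t => p.eval t) μ := by
  simp_rw [eval_eq_sum_range]
  exact integrable_finsetSum _ fun i _ => (h i).1.const_mul _

theorem inner_aeval (h : IsSpectralMeasure T φ μ) (p : ℝ[X]) :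
    ⟪φ, aeval T p φ⟫ = ∫ t, p.eval t ∂μ := by
  simp_rw [eval_eq_sum_range, aeval_eq_sum_range]
  rw [integral_finsetSum _ fun i _ => (h i).1.const_mul _]
  simp only [FunLike.coe_sum, Finset.sum_apply, FunLike.coe_smul,
    Pi.smul_apply, inner_sum, real_inner_smul_right, (h _).2, integral_const_mul]

theorem integral_pow_le (h : IsSpectralMeasure T φ μ) {n : ℕ} (hn : 0 < n) :
    ∫ t, t ^ n ∂μ ≤ ‖T‖ ^ n * ‖φ‖ ^ 2 := by
  rw [← (h n).2]
  calc ⟪φ, (T ^ n) φ⟫ ≤ ‖φ‖ * (‖T ^ n‖ * ‖φ‖) :=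
        (real_inner_le_norm _ _).trans (by gcongr; exact (T ^ n).le_opNorm φ)
    _ ≤ ‖φ‖ * (‖T‖ ^ n * ‖φ‖) := by gcongr; exact norm_pow_le' T hn
    _ = ‖T‖ ^ n * ‖φ‖ ^ 2 := by ring

theorem ae_abs_lt (h : IsSpectralMeasure T φ μ) {r : ℝ} (hr : ‖T‖ < r) :
    ∀ᵐ t ∂μ, |t| < r := by
  have := h.isFiniteMeasure
  have hr0 : 0 < r := (norm_nonneg T).trans_lt hr
  set q := (‖T‖ / r) ^ 2
  have hq : q < 1 := by
    rw [sq_lt_one_iff₀ (by positivity), div_lt_one hr0]; exact hr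
  -- Markov's inequality for the even moments
  have hbound : ∀ n : ℕ, μ.real {t | r ≤ |t|} ≤ ‖φ‖ ^ 2 * q ^ (n + 1) := by
    intro n
    have he : Even (2 * (n + 1)) := even_two_mul _
    have hmarkov := mul_meas_ge_le_integral_of_nonneg
      (ae_of_all _ fun t => he.pow_nonneg t) (h _).1 (r ^ (2 * (n + 1)))
    have hsub : {t | r ≤ |t|} ⊆ {t | r ^ (2 * (n + 1)) ≤ t ^ (2 * (n + 1))} :=
      fun t (ht : r ≤ |t|) => show r ^ _ ≤ t ^ _ from he.pow_abs t ▸ pow_le_pow_left₀ hr0.le ht _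
    calc μ.real {t | r ≤ |t|} ≤ μ.real {t | r ^ (2 * (n + 1)) ≤ t ^ (2 * (n + 1))} :=
          measureReal_mono hsub
      _ ≤ ‖T‖ ^ (2 * (n + 1)) * ‖φ‖ ^ 2 / r ^ (2 * (n + 1)) := by
          rw [le_div_iff₀ (by positivity)]
          linarith [h.integral_pow_le (n := 2 * (n + 1)) (by omega)]
      _ = ‖φ‖ ^ 2 * q ^ (n + 1) := by rw [← pow_mul, div_pow]; ring
  have hlim : Tendsto (fun n => ‖φ‖ ^ 2 * q ^ (n + 1)) atTop (𝓝 0) := by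
    simpa using ((tendsto_pow_atTop_nhds_zero_of_lt_one (by positivity) hq).comp
      (tendsto_add_atTop_nat 1)).const_mul (‖φ‖ ^ 2)
  have hnull : μ.real {t | r ≤ |t|} = 0 :=
    le_antisymm (ge_of_tendsto' hlim hbound) measureReal_nonneg
  rw [ae_iff]
  simpa [measureReal_eq_zero_iff] using hnull

variable [CompleteSpace H]

theorem norm_aeval_apply_sq (hT : IsSelfAdjoint T) (h : IsSpectralMeasure T φ μ) (p : ℝ[X]) :
    ‖aeval T p φ‖ ^ 2 = ∫ t, p.eval t ^ 2 ∂μ := by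
  have hsymm := ContinuousLinearMap.isSelfAdjoint_iff_isSymmetric.mp (hT.aeval p)
  rw [← real_inner_self_eq_norm_sq, ← ContinuousLinearMap.coe_coe, hsymm,
    ContinuousLinearMap.coe_coe, ← mul_apply_eq_comp, ← map_mul,
    h.inner_aeval]
  simp [sq]

theorem exists_seq_approx_eigenvector (hT : IsSelfAdjoint T) (h : IsSpectralMeasure T φ μ)
    (x : ℝ) : ∃ ψ : ℕ → H, (∀ n, ‖ψ n‖ ≤ ‖φ‖) ∧
      Tendsto (fun n => ⟪φ, ψ n⟫) atTop (𝓝 (μ.real {x})) ∧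
      Tendsto (fun n => T (ψ n) - x • ψ n) atTop (𝓝 0) := by
  have := h.isFiniteMeasure
  obtain ⟨b, hb_eq_one, hb_Icc⟩ := exists_polynomial_eval_eq_one_iff_and_mem_Icc x (‖T‖ + 1)
  have hb_ae : ∀ᵐ t ∂μ, b.eval t ∈ Icc 0 1 := by
    filter_upwards [h.ae_abs_lt (lt_add_one ‖T‖)] with t ht using hb_Icc t ht.le
  have hlevel : {t | b.eval t = 1} = {x} := by ext t; exact hb_eq_one t
  have hlim : ∀ {g : ℝ → ℝ}, Integrable g μ →
      Tendsto (fun n : ℕ => ∫ t, g t * b.eval t ^ n ∂μ) atTop (𝓝 (μ.real {x} * g x)) := by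
    intro g hg
    have := tendsto_integral_mul_pow_of_mem_Icc b.continuous.measurable hg hb_ae
    rwa [hlevel, integral_singleton, smul_eq_mul] at this
  refine ⟨fun n => aeval T (b ^ n) φ, fun n => ?_, ?_, ?_⟩
  · rw [← sq_le_sq₀ (norm_nonneg _) (norm_nonneg _), h.norm_aeval_apply_sq hT,
      ← h.measureReal_univ]
    calc ∫ t, (b ^ n).eval t ^ 2 ∂μ ≤ ∫ _, (1 : ℝ) ∂μ := by
          refine integral_mono_of_nonneg (ae_of_all _ fun t => sq_nonneg _) (integrable_const 1) ?_
          filter_upwards [hb_ae] with t ⟨h0, h1⟩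
          rw [eval_pow, ← pow_mul]
          exact pow_le_one₀ h0 h1
      _ = μ.real univ := by simp
  · simpa only [h.inner_aeval, eval_pow, one_mul, mul_one] using
      hlim (g := fun _ => 1) (integrable_const 1)
  · have hnorm : ∀ n : ℕ, ‖T (aeval T (b ^ n) φ) - x • aeval T (b ^ n) φ‖ ^ 2
        = ∫ t, (t - x) ^ 2 * b.eval t ^ (2 * n) ∂μ := by
      intro n
      have : T (aeval T (b ^ n) φ) - x • aeval T (b ^ n) φ = aeval T ((X - C x) * b ^ n) φ := by
        simp [mul_apply_eq_comp]
      rw [this, h.norm_aeval_apply_sq hT]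
      congr 1 with t
      simp only [eval_mul, eval_sub, eval_X, eval_C, eval_pow]
      ring
    have hint := h.integrable_eval ((X - C x) ^ 2)
    simp only [Polynomial.eval_pow, eval_sub, eval_X, eval_C] at hint
    have hsq := (hlim hint).comp (tendsto_id.const_mul_atTop' two_pos)
    rw [tendsto_zero_iff_norm_tendsto_zero]
    convert hsq.sqrt using 1
    · funext n
      rw [Function.comp_apply, id, ← hnorm, Real.sqrt_sq (norm_nonneg _)]
    · simp

end IsSpectralMeasure

section RankOnePerturbation

open InnerProductSpace

variable {H : Type*} [NormedAddCommGroup H] [InnerProductSpace ℝ H] [CompleteSpace H]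
  {A : H →L[ℝ] H} {φ : H}

theorem inner_add_smul_rankOne_sub (hA : IsSelfAdjoint A) (l l' : ℝ) (u v : H) :
    ⟪v, (A + l • rankOne ℝ φ φ) u⟫ - ⟪(A + l' • rankOne ℝ φ φ) v, u⟫
      = (l - l') * (⟪φ, u⟫ * ⟪φ, v⟫) := by
  have hA' : ⟪A v, u⟫ = ⟪v, A u⟫ :=
    ContinuousLinearMap.isSelfAdjoint_iff_isSymmetric.mp hA v u
  simp only [add_apply, smul_apply, rankOne_apply,
    inner_add_left, inner_add_right, real_inner_smul_left, real_inner_smul_right, hA',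
    real_inner_comm v φ]
  ring

theorem eq_of_measure_singleton_ne_zero (hA : IsSelfAdjoint A) {μ μ' : Measure ℝ}
    {l l' x : ℝ} (h : IsSpectralMeasure (A + l • rankOne ℝ φ φ) φ μ)
    (h' : IsSpectralMeasure (A + l' • rankOne ℝ φ φ) φ μ') (hx : μ {x} ≠ 0)
    (hx' : μ' {x} ≠ 0) : l = l' := by
  have hK : IsSelfAdjoint (rankOne ℝ φ φ) := (isPositive_rankOne_self φ).isSelfAdjoint
  obtain ⟨ψ, hψ, hψφ, hψx⟩ :=
    h.exists_seq_approx_eigenvector (hA.add ((IsSelfAdjoint.all l).smul hK)) x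
  obtain ⟨ψ', hψ', hψ'φ, hψ'x⟩ :=
    h'.exists_seq_approx_eigenvector (hA.add ((IsSelfAdjoint.all l').smul hK)) x
  have hid : ∀ n, (l - l') * (⟪φ, ψ n⟫ * ⟪φ, ψ' n⟫)
      = ⟪ψ' n, (A + l • rankOne ℝ φ φ) (ψ n) - x • ψ n⟫
        - ⟪ψ n, (A + l' • rankOne ℝ φ φ) (ψ' n) - x • ψ' n⟫ := by
    intro n
    rw [← inner_add_smul_rankOne_sub hA]
    simp only [inner_sub_right, real_inner_smul_right, real_inner_comm (ψ n)]
    ring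
  have hlim := (hψφ.mul hψ'φ).const_mul (l - l')
  have hzero : Tendsto (fun n => (l - l') * (⟪φ, ψ n⟫ * ⟪φ, ψ' n⟫)) atTop (𝓝 0) := by
    simpa only [hid, sub_zero] using
      (tendsto_inner_zero_of_norm_le hψ' hψx).sub (tendsto_inner_zero_of_norm_le hψ hψ'x)
  have hprod := tendsto_nhds_unique hlim hzero
  have := h.isFiniteMeasure
  have := h'.isFiniteMeasure
  simpa [sub_eq_zero, measureReal_eq_zero_iff, hx, hx'] using hprod

end RankOnePerturbation

theorem stmt_4_general {H : Type*} [NormedAddCommGroup H] [InnerProductSpace ℝ H]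
    [CompleteSpace H]
    (A : H →L[ℝ] H) (hA : IsSelfAdjoint A) (φ : H)
    (μ : ℝ → Measure ℝ)
    (hmom : ∀ (l : ℝ) (n : ℕ),
      Integrable (fun x : ℝ => x ^ n) (μ l) ∧
      ⟪φ, (((A + l • ((innerSL ℝ φ).smulRight φ)) ^ n) φ)⟫ = ∫ x, x ^ n ∂(μ l))
    (ν : Measure ℝ) [NullSingletonClass ν] :
    ∀ x : ℝ, ∫⁻ l, μ l {x} ∂ν = 0 := by
  intro x
  have hatoms : {l | μ l {x} ≠ 0}.Subsingleton := fun l hl l' hl' =>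
    eq_of_measure_singleton_ne_zero hA (hmom l) (hmom l') hl hl'
  have hae : (fun l => μ l {x}) =ᵐ[ν] 0 := by
    simpa [EventuallyEq, ae_iff] using hatoms.measure_zero ν
  exact (lintegral_congr_ae hae).trans lintegral_zero

theorem stmt_4 {H : Type*} [NormedAddCommGroup H] [InnerProductSpace ℝ H]
    [CompleteSpace H] [TopologicalSpace.SeparableSpace H]
    (A : H →L[ℝ] H) (hA : IsSelfAdjoint A) (φ : H) (hφ : ‖φ‖ = 1)
    (μ : ℝ → Measure ℝ) (hprob : ∀ l : ℝ, IsProbabilityMeasure (μ l))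
    (hmom : ∀ (l : ℝ) (n : ℕ),
      Integrable (fun x : ℝ => x ^ n) (μ l) ∧
      ⟪φ, (((A + l • ((innerSL ℝ φ).smulRight φ)) ^ n) φ)⟫ = ∫ x, x ^ n ∂(μ l))
    (ν : Measure ℝ) [SigmaFinite ν] [NullSingletonClass ν] :
    ∀ x : ℝ, ∫⁻ l, μ l {x} ∂ν = 0 :=
  stmt_4_general A hA φ μ hmom ν
end

section
/- Let μ and ν be Borel measures on ℝ with ∫ 1/(1+y²) dν(y) < ∞, μ finite, and let F_μ(z) = ∫ dμ(y)/(y−z) for z in the upper half-plane. Define κ(B) = ∫ μ_λ(B) dν(λ), where μ_λ are the spectral measures of the rank-one perturbation family with unperturbed spectral measure μ. Then for all z in the upper half-plane, P_κ(z) = P_ν(−1/F_μ(z)), where P_η denotes the Poisson transform (imaginary part of the Borel transform evaluated via ∫ Im(−1/(y−z)) weights). -/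
/-!
The moments of `μ_λ` are `⟪φ, (A + λP)ⁿ φ⟫` with `P = ⟪φ, ·⟫ φ`, and expanding `(A + λP)ⁿ⁺¹`
gives `m^λ_{n+1} = m^0_{n+1} + λ ∑_{i+j=n} m^0_i m^λ_j`. The moments grow at most geometrically,
so the measures are compactly supported and `F_{μ_λ}(z) = -∑ m^λ_n z⁻ⁿ⁻¹` near `∞`; there the
recursion is the Cauchy-product form of the Aronszajn–Krein identity `F_0 - F_λ = λ F_0 F_λ`,
which then holds on the whole upper half-plane by analytic continuation. Hence
`F_{μ_λ}(z) = (λ - w)⁻¹` with `w = -F_μ(z)⁻¹`, whose imaginary part is the Poisson kernel of `w`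
at `λ`; the identity thus holds for each `λ` before integrating against `ν`.
-/

open MeasureTheory Set Filter Finset
open scoped RealInnerProductSpace

noncomputable def borelTransform (η : Measure ℝ) (z : ℂ) : ℂ :=
  ∫ y, ((y : ℂ) - z)⁻¹ ∂η

section BorelTransform

variable {z : ℂ}

lemma im_inv_ofReal_sub (y : ℝ) (z : ℂ) :
    ((y : ℂ) - z)⁻¹.im = z.im / ((y - z.re) ^ 2 + z.im ^ 2) := by
  simp [Complex.inv_im, Complex.normSq_apply]
  ring

lemma im_le_norm_ofReal_sub (y : ℝ) (z : ℂ) : z.im ≤ ‖(y : ℂ) - z‖ :=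
  calc z.im ≤ |((y : ℂ) - z).im| := by simp [le_abs_self]
    _ ≤ ‖(y : ℂ) - z‖ := Complex.abs_im_le_norm _

lemma ofReal_sub_ne_zero (y : ℝ) (hz : 0 < z.im) : (y : ℂ) - z ≠ 0 :=
  norm_pos_iff.mp (hz.trans_le (im_le_norm_ofReal_sub y z))

lemma integrable_inv_ofReal_sub (η : Measure ℝ) [IsFiniteMeasure η] (hz : 0 < z.im) :
    Integrable (fun y : ℝ => ((y : ℂ) - z)⁻¹) η := by
  refine (integrable_const z.im⁻¹).mono' (by fun_prop) (ae_of_all _ fun y => ?_)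
  rw [norm_inv]
  exact inv_anti₀ hz (im_le_norm_ofReal_sub y z)

lemma im_borelTransform (η : Measure ℝ) [IsFiniteMeasure η] (hz : 0 < z.im) :
    (borelTransform η z).im = ∫ y, z.im / ((y - z.re) ^ 2 + z.im ^ 2) ∂η := by
  rw [borelTransform, ← RCLike.im_to_complex, ← integral_im (integrable_inv_ofReal_sub η hz)]
  simp only [RCLike.im_to_complex, im_inv_ofReal_sub]

lemma im_borelTransform_pos (η : Measure ℝ) [IsFiniteMeasure η] [NeZero η] (hz : 0 < z.im) :
    0 < (borelTransform η z).im := by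
  have hint : Integrable (fun y : ℝ => z.im / ((y - z.re) ^ 2 + z.im ^ 2)) η :=
    (integrable_inv_ofReal_sub η hz).im.congr (ae_of_all _ fun y => im_inv_ofReal_sub y z)
  have hsupp : Function.support (fun y : ℝ => z.im / ((y - z.re) ^ 2 + z.im ^ 2)) = univ :=
    eq_univ_of_forall fun y => (by positivity : 0 < z.im / ((y - z.re) ^ 2 + z.im ^ 2)).ne'
  rw [im_borelTransform η hz, integral_pos_iff_support_of_nonneg (fun y => by positivity) hint,
    hsupp, Measure.measure_univ_pos]
  exact NeZero.ne η

lemma half_im_le_im_of_mem_ball {z₀ : ℂ} (hz : z ∈ Metric.ball z₀ (z₀.im / 2)) :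
    z₀.im / 2 ≤ z.im := by
  have h := (Complex.abs_im_le_norm (z - z₀)).trans_lt (mem_ball_iff_norm.mp hz)
  rw [Complex.sub_im, abs_lt] at h
  linarith [h.1]

lemma hasDerivAt_inv_ofReal_sub (y : ℝ) (hz : 0 < z.im) :
    HasDerivAt (fun w : ℂ => ((y : ℂ) - w)⁻¹) (((y : ℂ) - z) ^ 2)⁻¹ z := by
  have h := ((hasDerivAt_id z).const_sub (y : ℂ)).inv (ofReal_sub_ne_zero y hz)
  rwa [neg_neg, one_div] at h

lemma differentiableOn_borelTransform (η : Measure ℝ) [IsFiniteMeasure η] :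
    DifferentiableOn ℂ (borelTransform η) {z | 0 < z.im} := by
  intro z₀ hz₀
  have hε : 0 < z₀.im / 2 := half_pos hz₀
  have hball : ∀ z ∈ Metric.ball z₀ (z₀.im / 2), 0 < z.im := fun z hz =>
    hε.trans_le (half_im_le_im_of_mem_ball hz)
  have hbound : ∀ (y : ℝ), ∀ z ∈ Metric.ball z₀ (z₀.im / 2),
      ‖(((y : ℂ) - z) ^ 2)⁻¹‖ ≤ ((z₀.im / 2) ^ 2)⁻¹ := fun y z hz => by
    rw [norm_inv, norm_pow]
    exact inv_anti₀ (by positivity) (pow_le_pow_left₀ hε.le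
      ((half_im_le_im_of_mem_ball hz).trans (im_le_norm_ofReal_sub y z)) 2)
  obtain ⟨-, hderiv⟩ := hasDerivAt_integral_of_dominated_loc_of_deriv_le
    (F := fun z (y : ℝ) => ((y : ℂ) - z)⁻¹) (Metric.ball_mem_nhds z₀ hε)
    (Eventually.of_forall fun z => by fun_prop) (integrable_inv_ofReal_sub η hz₀) (by fun_prop)
    (ae_of_all _ hbound) (integrable_const _)
    (ae_of_all _ fun y z hz => hasDerivAt_inv_ofReal_sub y (hball z hz))
  exact hderiv.differentiableAt.differentiableWithinAt

end BorelTransform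

lemma nonneg_of_forall_abs_le_pow {C : ℝ} {a : ℕ → ℝ} (h : ∀ n, |a n| ≤ C ^ n) : 0 ≤ C :=
  (abs_nonneg _).trans (by simpa using h 1)

section Moments

variable (η : Measure ℝ) [IsFiniteMeasure η] {C : ℝ}

lemma measure_le_abs_eq_zero_of_abs_integral_pow_le
    (hint : ∀ n, Integrable (fun x : ℝ => x ^ n) η) (hbound : ∀ n, |∫ x, x ^ n ∂η| ≤ C ^ n)
    {t : ℝ} (ht : C < t) : η {y | t ≤ |y|} = 0 := by
  have hC := nonneg_of_forall_abs_le_pow hbound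
  have ht₀ : 0 < t := hC.trans_lt ht
  have hmarkov : ∀ n : ℕ, η.real {y | t ≤ |y|} ≤ ((C / t) ^ 2) ^ n := fun n => by
    have hsub : {y : ℝ | t ≤ |y|} ⊆ {y | t ^ (2 * n) ≤ y ^ (2 * n)} := fun y hy => by
      simpa [pow_mul, sq_abs] using pow_le_pow_left₀ ht₀.le hy (2 * n)
    have h := mul_meas_ge_le_integral_of_nonneg
      (ae_of_all _ fun y => (even_two_mul n).pow_nonneg y) (hint (2 * n)) (t ^ (2 * n))
    rw [← pow_mul, div_pow, le_div_iff₀ (by positivity), mul_comm]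
    calc t ^ (2 * n) * η.real {y | t ≤ |y|}
        ≤ t ^ (2 * n) * η.real {y | t ^ (2 * n) ≤ y ^ (2 * n)} := by gcongr; finiteness
      _ ≤ ∫ x, x ^ (2 * n) ∂η := h
      _ ≤ C ^ (2 * n) := (le_abs_self _).trans (hbound _)
  have hlim : Tendsto (fun n : ℕ => ((C / t) ^ 2) ^ n) atTop (nhds 0) :=
    tendsto_pow_atTop_nhds_zero_of_lt_one (by positivity)
      (pow_lt_one₀ (by positivity) ((div_lt_one ht₀).mpr ht) two_ne_zero)
  exact (measureReal_eq_zero_iff).mp (le_antisymm (ge_of_tendsto' hlim hmarkov) measureReal_nonneg)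

lemma ae_abs_le_of_abs_integral_pow_le
    (hint : ∀ n, Integrable (fun x : ℝ => x ^ n) η) (hbound : ∀ n, |∫ x, x ^ n ∂η| ≤ C ^ n) :
    ∀ᵐ y ∂η, |y| ≤ C := by
  have hlt : ∀ᵐ y ∂η, ∀ q : ℚ, C < q → |y| < (q : ℝ) := by
    refine ae_all_iff.mpr fun q => ?_
    by_cases hq : C < q
    · filter_upwards [measure_eq_zero_iff_ae_notMem.mp
        (measure_le_abs_eq_zero_of_abs_integral_pow_le η hint hbound hq)] with y hy
      exact fun _ => not_le.mp hy
    · exact ae_of_all _ fun y h => absurd h hq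
  filter_upwards [hlt] with y hy
  by_contra! h
  obtain ⟨q, hCq, hqy⟩ := exists_rat_btwn h
  exact (hy q hCq).not_gt hqy

end Moments

lemma summable_norm_ofReal_mul_pow {a : ℕ → ℝ} {C : ℝ} (ha : ∀ n, |a n| ≤ C ^ n) {q : ℂ}
    (hq : C * ‖q‖ < 1) : Summable fun n => ‖(a n : ℂ) * q ^ n‖ := by
  have hC := nonneg_of_forall_abs_le_pow ha
  refine Summable.of_nonneg_of_le (fun n => norm_nonneg _) (fun n => ?_)
    (summable_geometric_of_lt_one (by positivity) hq)
  rw [norm_mul, norm_pow, Complex.norm_real, Real.norm_eq_abs, mul_pow]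
  exact mul_le_mul_of_nonneg_right (ha n) (by positivity)

lemma tsum_sub_tsum_eq_mul_of_recursion {𝕜 : Type*} [NormedField 𝕜] [CompleteSpace 𝕜]
    {a b : ℕ → 𝕜} {c q : 𝕜}
    (ha : Summable fun n => ‖a n * q ^ n‖) (hb : Summable fun n => ‖b n * q ^ n‖)
    (h₀ : a 0 = b 0)
    (hrec : ∀ n, b (n + 1) = a (n + 1) + c * ∑ p ∈ antidiagonal n, a p.1 * b p.2) :
    ∑' n, b n * q ^ n - ∑' n, a n * q ^ n
      = c * q * ((∑' n, a n * q ^ n) * ∑' n, b n * q ^ n) := by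
  rw [← hb.of_norm.tsum_sub ha.of_norm, (hb.of_norm.sub ha.of_norm).tsum_eq_zero_add,
    tsum_mul_tsum_eq_tsum_sum_antidiagonal_of_summable_norm ha hb, ← tsum_mul_left, h₀,
    sub_self, zero_add]
  refine tsum_congr fun n => ?_
  rw [hrec n, add_mul, add_sub_cancel_left, Finset.mul_sum, Finset.mul_sum, Finset.sum_mul]
  refine Finset.sum_congr rfl fun p hp => ?_
  rw [← mem_antidiagonal.mp hp]
  ring

lemma inv_ofReal_sub_eq_tsum {C y : ℝ} (hy : |y| ≤ C) {z : ℂ} (hz : C < ‖z‖) :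
    ((y : ℂ) - z)⁻¹ = -z⁻¹ * ∑' n, ((y : ℂ) * z⁻¹) ^ n := by
  have hz₀ : z ≠ 0 := norm_pos_iff.mp ((abs_nonneg y).trans_lt (hy.trans_lt hz))
  have hlt : ‖(y : ℂ) * z⁻¹‖ < 1 := by
    rw [norm_mul, norm_inv, Complex.norm_real, Real.norm_eq_abs, ← div_eq_mul_inv,
      div_lt_one (norm_pos_iff.mpr hz₀)]
    exact hy.trans_lt hz
  rw [tsum_geometric_of_norm_lt_one hlt, neg_mul, ← mul_inv, mul_sub, mul_one, mul_left_comm,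
    mul_inv_cancel₀ hz₀, mul_one, ← inv_neg, neg_sub]

lemma borelTransform_eq_tsum (η : Measure ℝ) [IsFiniteMeasure η] {C : ℝ} (hC : 0 ≤ C)
    (hsupp : ∀ᵐ y ∂η, |y| ≤ C) (hint : ∀ n, Integrable (fun x : ℝ => x ^ n) η)
    {z : ℂ} (hz : C < ‖z‖) :
    borelTransform η z = -z⁻¹ * ∑' n, ((∫ x, x ^ n ∂η : ℝ) : ℂ) * z⁻¹ ^ n := by
  have hterm : ∀ n, ∫ y, ((y : ℂ) * z⁻¹) ^ n ∂η = ((∫ x, x ^ n ∂η : ℝ) : ℂ) * z⁻¹ ^ n := by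
    intro n
    simp_rw [mul_pow, ← Complex.ofReal_pow]
    rw [integral_mul_const, integral_complex_ofReal]
  have hq : C * ‖z⁻¹‖ < 1 := by
    rwa [norm_inv, ← div_eq_mul_inv, div_lt_one (hC.trans_lt hz)]
  have hint' : ∀ n, Integrable (fun y : ℝ => ((y : ℂ) * z⁻¹) ^ n) η := fun n => by
    simpa [mul_pow] using (hint n).ofReal.mul_const (z⁻¹ ^ n)
  have hsum : Summable fun n => ∫ y, ‖((y : ℂ) * z⁻¹) ^ n‖ ∂η := by
    refine Summable.of_nonneg_of_le (fun n => integral_nonneg fun y => norm_nonneg _)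
      (fun n => ?_) ((summable_geometric_of_lt_one (by positivity) hq).mul_left (η.real univ))
    calc ∫ y, ‖((y : ℂ) * z⁻¹) ^ n‖ ∂η ≤ ∫ _, (C * ‖z⁻¹‖) ^ n ∂η :=
          integral_mono_ae (hint' n).norm (integrable_const _) (hsupp.mono fun y hy => by
            simp only [norm_pow, norm_mul, Complex.norm_real, Real.norm_eq_abs]
            gcongr)
      _ = η.real univ * (C * ‖z⁻¹‖) ^ n := by simp
  rw [borelTransform, integral_congr_ae (hsupp.mono fun y hy => inv_ofReal_sub_eq_tsum hy hz),
    integral_const_mul, ← integral_tsum_of_summable_integral_norm hint' hsum]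
  simp_rw [hterm]

section AronszajnKrein

variable (η₀ η₁ : Measure ℝ) [IsProbabilityMeasure η₀] [IsProbabilityMeasure η₁] {C l : ℝ}
  (hint₀ : ∀ n, Integrable (fun x : ℝ => x ^ n) η₀) (hint₁ : ∀ n, Integrable (fun x : ℝ => x ^ n) η₁)
  (hb₀ : ∀ n, |∫ x, x ^ n ∂η₀| ≤ C ^ n) (hb₁ : ∀ n, |∫ x, x ^ n ∂η₁| ≤ C ^ n)
  (hrec : ∀ n, ∫ x, x ^ (n + 1) ∂η₁ = ∫ x, x ^ (n + 1) ∂η₀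
    + l * ∑ p ∈ antidiagonal n, (∫ x, x ^ p.1 ∂η₀) * ∫ x, x ^ p.2 ∂η₁)
include hint₀ hint₁ hb₀ hb₁ hrec

lemma borelTransform_sub_eq_mul_of_norm_gt {z : ℂ} (hz : C < ‖z‖) :
    borelTransform η₀ z - borelTransform η₁ z
      = l * borelTransform η₀ z * borelTransform η₁ z := by
  have hC := nonneg_of_forall_abs_le_pow hb₀
  have hq : C * ‖z⁻¹‖ < 1 := by
    rwa [norm_inv, ← div_eq_mul_inv, div_lt_one (hC.trans_lt hz)]
  have key := tsum_sub_tsum_eq_mul_of_recursion (c := (l : ℂ))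
    (summable_norm_ofReal_mul_pow hb₀ hq) (summable_norm_ofReal_mul_pow hb₁ hq) (by simp)
    (fun n => by rw [hrec n]; push_cast; rfl)
  rw [borelTransform_eq_tsum η₀ hC (ae_abs_le_of_abs_integral_pow_le η₀ hint₀ hb₀) hint₀ hz,
    borelTransform_eq_tsum η₁ hC (ae_abs_le_of_abs_integral_pow_le η₁ hint₁ hb₁) hint₁ hz]
  linear_combination z⁻¹ * key

theorem borelTransform_sub_eq_mul {z : ℂ} (hz : 0 < z.im) :
    borelTransform η₀ z - borelTransform η₁ z
      = l * borelTransform η₀ z * borelTransform η₁ z := by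
  have hC := nonneg_of_forall_abs_le_pow hb₀
  have hU : IsOpen {z : ℂ | 0 < z.im} := isOpen_lt continuous_const Complex.continuous_im
  have hF₀ := (differentiableOn_borelTransform η₀).analyticOnNhd hU
  have hF₁ := (differentiableOn_borelTransform η₁).analyticOnNhd hU
  set z₀ : ℂ := ((C + 1 : ℝ) : ℂ) * Complex.I
  have hz₀ : C < ‖z₀‖ := by
    rw [norm_mul, Complex.norm_I, mul_one, Complex.norm_real, Real.norm_of_nonneg (by linarith)]
    linarith
  have hlarge : (fun z => borelTransform η₀ z - borelTransform η₁ z)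
      =ᶠ[nhds z₀] fun z => l * borelTransform η₀ z * borelTransform η₁ z :=
    eventually_of_mem ((isOpen_lt continuous_const continuous_norm).mem_nhds hz₀)
      fun z hz => borelTransform_sub_eq_mul_of_norm_gt η₀ η₁ hint₀ hint₁ hb₀ hb₁ hrec hz
  exact (hF₀.sub hF₁).eqOn_of_preconnected_of_eventuallyEq
    ((analyticOnNhd_const.mul hF₀).mul hF₁) (convex_halfSpace_im_gt 0).isPreconnected
    (by simp [z₀]; linarith) hlarge hz

end AronszajnKrein

lemma eq_inv_ofReal_add_inv_of_sub_eq_mul {F₀ F₁ : ℂ} {l : ℝ} (hF₀ : 0 < F₀.im)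
    (h : F₀ - F₁ = l * F₀ * F₁) : F₁ = ((l : ℂ) + F₀⁻¹)⁻¹ := by
  have hF₀ne : F₀ ≠ 0 := fun h0 => by simp [h0] at hF₀
  have hD : (l : ℂ) + F₀⁻¹ ≠ 0 := fun hD => by
    have him := congrArg Complex.im hD
    simp only [Complex.add_im, Complex.ofReal_im, zero_add, Complex.inv_im, Complex.zero_im,
      neg_div, neg_eq_zero, div_eq_zero_iff, hF₀.ne', false_or, map_eq_zero, hF₀ne] at him
  refine eq_inv_of_mul_eq_one_left ?_
  field_simp
  linear_combination -h

lemma add_pow_succ_eq_pow_add_sum {R : Type*} [Semiring R] (a b : R) (n : ℕ) :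
    (a + b) ^ (n + 1) = a ^ (n + 1) + ∑ p ∈ antidiagonal n, a ^ p.1 * b * (a + b) ^ p.2 := by
  induction n with
  | zero => simp
  | succ n ih =>
    rw [Nat.sum_antidiagonal_succ, pow_succ' _ (n + 1), add_mul]
    nth_rewrite 1 [ih]
    simp only [mul_add, Finset.mul_sum, pow_succ', pow_zero, one_mul, mul_assoc]
    abel

section RankOnePerturbation

variable {H : Type*} [NormedAddCommGroup H] [InnerProductSpace ℝ H]

lemma inner_pow_add_smul_rankOne_apply (A : H →L[ℝ] H) (φ : H) (l : ℝ) (n : ℕ) :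
    ⟪φ, ((A + l • (innerSL ℝ φ).smulRight φ) ^ (n + 1)) φ⟫
      = ⟪φ, (A ^ (n + 1)) φ⟫ + l * ∑ p ∈ antidiagonal n,
          ⟪φ, (A ^ p.1) φ⟫ * ⟪φ, ((A + l • (innerSL ℝ φ).smulRight φ) ^ p.2) φ⟫ := by
  rw [add_pow_succ_eq_pow_add_sum]
  simp only [add_apply, FunLike.coe_sum, Finset.sum_apply, mul_apply_eq_comp, smul_apply,
    ContinuousLinearMap.smulRight_apply, innerSL_apply_apply, map_smul, inner_add_right,
    inner_sum, inner_smul_right, Finset.mul_sum]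
  congr 1
  refine Finset.sum_congr rfl fun p _ => ?_
  ring

lemma abs_inner_pow_apply_le (B : H →L[ℝ] H) {φ : H} (hφ : ‖φ‖ = 1) (n : ℕ) :
    |⟪φ, (B ^ n) φ⟫| ≤ ‖B‖ ^ n := by
  have hpow : ∀ n : ℕ, ‖(B ^ n) φ‖ ≤ ‖B‖ ^ n := fun n => by
    induction n with
    | zero => simp [hφ]
    | succ n ih =>
      rw [pow_succ', mul_apply_eq_comp, pow_succ']
      exact B.le_opNorm_of_le ih
  calc |⟪φ, (B ^ n) φ⟫| ≤ ‖φ‖ * ‖(B ^ n) φ‖ := abs_real_inner_le_norm _ _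
    _ ≤ ‖B‖ ^ n := by rw [hφ, one_mul]; exact hpow n

end RankOnePerturbation

theorem stmt_5_general {H : Type*} [NormedAddCommGroup H] [InnerProductSpace ℝ H]
    (A : H →L[ℝ] H) (φ : H) (hφ : ‖φ‖ = 1)
    (μ : ℝ → Measure ℝ) (hprob : ∀ l : ℝ, IsProbabilityMeasure (μ l))
    (hmom : ∀ (l : ℝ) (n : ℕ),
      Integrable (fun x : ℝ => x ^ n) (μ l) ∧
      ⟪φ, (((A + l • ((innerSL ℝ φ).smulRight φ)) ^ n) φ)⟫ = ∫ x, x ^ n ∂(μ l))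
    (ν : Measure ℝ) :
    ∀ z : ℂ, 0 < z.im → ∀ w : ℂ, w = -(∫ y, ((y : ℂ) - z)⁻¹ ∂(μ 0))⁻¹ →
      (∫ l, (∫ y, z.im / ((y - z.re) ^ 2 + z.im ^ 2) ∂(μ l)) ∂ν)
        = ∫ y, w.im / ((y - w.re) ^ 2 + w.im ^ 2) ∂ν := by
  intro z hz w hw
  have := hprob
  have hw' : w = -(borelTransform (μ 0) z)⁻¹ := hw
  set B : ℝ → H →L[ℝ] H := fun l => A + l • (innerSL ℝ φ).smulRight φ
  have hint : ∀ l n, Integrable (fun x : ℝ => x ^ n) (μ l) := fun l n => (hmom l n).1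
  have hμ₀ : ∀ n, ⟪φ, (A ^ n) φ⟫ = ∫ x, x ^ n ∂(μ 0) := fun n => by simpa using (hmom 0 n).2
  have hbound : ∀ l n, |∫ x, x ^ n ∂(μ l)| ≤ ‖B l‖ ^ n := fun l n => by
    rw [← (hmom l n).2]; exact abs_inner_pow_apply_le (B l) hφ n
  have hrec : ∀ l n, ∫ x, x ^ (n + 1) ∂(μ l) = ∫ x, x ^ (n + 1) ∂(μ 0)
      + l * ∑ p ∈ antidiagonal n, (∫ x, x ^ p.1 ∂(μ 0)) * ∫ x, x ^ p.2 ∂(μ l) := fun l n => by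
    simp only [← hμ₀, ← (hmom l _).2]
    exact inner_pow_add_smul_rankOne_apply A φ l n
  have hF₀ : 0 < (borelTransform (μ 0) z).im := im_borelTransform_pos (μ 0) hz
  refine integral_congr_ae (ae_of_all _ fun l => ?_)
  dsimp only
  have hAK := borelTransform_sub_eq_mul (μ 0) (μ l) (hint 0) (hint l)
    (fun n => (hbound 0 n).trans (pow_le_pow_left₀ (norm_nonneg _) (le_max_left _ _) n))
    (fun n => (hbound l n).trans (pow_le_pow_left₀ (norm_nonneg _) (le_max_right _ _) n))
    (hrec l) hz
  rw [← im_borelTransform (μ l) hz, ← im_inv_ofReal_sub, hw', sub_neg_eq_add,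
    eq_inv_ofReal_add_inv_of_sub_eq_mul hF₀ hAK]

/-- Relation between the Poisson transforms of the averaged measure `κ` and of `ν`:
`P_κ(z) = P_ν(-1/F_μ(z))`.  Here `P_κ(z)` is written as the iterated integral
`∫ P_{μ_λ}(z) dν(λ)`. -/
theorem stmt_5 {H : Type*} [NormedAddCommGroup H] [InnerProductSpace ℝ H]
    [CompleteSpace H] [TopologicalSpace.SeparableSpace H]
    (A : H →L[ℝ] H) (hA : IsSelfAdjoint A) (φ : H) (hφ : ‖φ‖ = 1)
    (μ : ℝ → Measure ℝ) (hprob : ∀ l : ℝ, IsProbabilityMeasure (μ l))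
    (hmom : ∀ (l : ℝ) (n : ℕ),
      Integrable (fun x : ℝ => x ^ n) (μ l) ∧
      ⟪φ, (((A + l • ((innerSL ℝ φ).smulRight φ)) ^ n) φ)⟫ = ∫ x, x ^ n ∂(μ l))
    (ν : Measure ℝ) (hν : ∫⁻ y, ENNReal.ofReal (1 / (1 + y ^ 2)) ∂ν < ⊤) :
    ∀ z : ℂ, 0 < z.im → ∀ w : ℂ, w = -(∫ y, ((y : ℂ) - z)⁻¹ ∂(μ 0))⁻¹ →
      (∫ l, (∫ y, z.im / ((y - z.re) ^ 2 + z.im ^ 2) ∂(μ l)) ∂ν)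
        = ∫ y, w.im / ((y - w.re) ^ 2 + w.im ^ 2) ∂ν :=
  stmt_5_general A φ hφ μ hprob hmom ν
end

section
/- If ν is uniformly 1-Hölder continuous (ν(I) ≤ K|I| for all intervals I), then the averaged measure κ(B) = ∫ μ_λ(B) dν(λ) over the rank-one perturbation family is also uniformly 1-Hölder continuous, with constant depending only on K. -/
/-!
Write `z = u + iγ` and `F(z) = ⟪φ, (A - z)⁻¹ φ⟫`. By the Aronszajn–Krein formula
`F_l = F / (1 + l F)`, the Poisson integral `π⁻¹ Im F_l(z)` of `μ_l` is, as a function of `l`, the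
Cauchy density with location `Re w` and scale `Im w`, where `w = -1 / F(z)`. Superlevel sets of a
Cauchy density are intervals, so by the layer-cake formula and `ν(I) ≤ K |I|` its `ν`-integral is
at most `K`. Since `1_{[u - γ, u + γ]} ≤ 2πγ P` for the Cauchy density `P` at `u` of scale `γ`,
this gives `κ([u - γ, u + γ]) ≤ πK · 2γ`.

Everything is done over `ℝ`: `(A - z)(A - z̄) = (A - u)² + γ²` is inverted by a Neumann series,
whose terms are polynomials in `A` and hence are matched with the moments of `μ_l`.
-/

open MeasureTheory Set
open scoped RealInnerProductSpace

open Polynomial ProbabilityTheory InnerProductSpace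
open scoped NNReal ENNReal Real

variable {H : Type*} [NormedAddCommGroup H] [InnerProductSpace ℝ H]

theorem ContinuousLinearMap.norm_le_of_abs_inner_le {T : H →L[ℝ] H}
    (hT : (T : H →ₗ[ℝ] H).IsSymmetric) {c : ℝ} (hc : 0 ≤ c)
    (h : ∀ x, |⟪T x, x⟫| ≤ c * ‖x‖ ^ 2) : ‖T‖ ≤ c := by
  rw [T.norm_eq_iSup_rayleighQuotient hT]
  refine ciSup_le fun x => ?_
  rcases eq_or_ne x 0 with rfl | hx
  · simpa using hc
  · rw [ContinuousLinearMap.rayleighQuotient, ContinuousLinearMap.reApplyInnerSelf_apply,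
      abs_div, abs_sq, div_le_iff₀ (by positivity)]
    exact h x

theorem ContinuousLinearMap.norm_pow_apply_le {𝕜 E : Type*} [NontriviallyNormedField 𝕜]
    [NormedAddCommGroup E] [NormedSpace 𝕜 E] (T : E →L[𝕜] E) (n : ℕ) (x : E) :
    ‖(T ^ n) x‖ ≤ ‖T‖ ^ n * ‖x‖ := by
  induction n with
  | zero => simp
  | succ n ih =>
    rw [pow_succ', mul_apply_eq_comp, pow_succ', mul_assoc]
    exact (T.le_opNorm _).trans (by gcongr)

theorem hasSum_pow_apply_of_one_sub_apply_eq {𝕜 E : Type*} [NontriviallyNormedField 𝕜]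
    [NormedAddCommGroup E] [NormedSpace 𝕜 E] [CompleteSpace E] {T : E →L[𝕜] E} (hT : ‖T‖ < 1)
    {w y : E} (h : (1 - T) w = y) : HasSum (fun n => (T ^ n) y) w := by
  have hw : (∑' n, T ^ n) y = w := by
    rw [← h, ← mul_apply_eq_comp, geom_series_mul_neg T hT, one_apply_eq_self]
  simpa [hw] using (summable_geometric_of_norm_lt_one hT).hasSum.mapL
    (ContinuousLinearMap.apply 𝕜 E y)

theorem isSymmetric_sub_smul_one {A : H →L[ℝ] H} (hA : (A : H →ₗ[ℝ] H).IsSymmetric) (u : ℝ) :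
    ((A - u • 1 : H →L[ℝ] H) : H →ₗ[ℝ] H).IsSymmetric := fun x y => by
  simpa [inner_sub_left, inner_sub_right, real_inner_smul_left, real_inner_smul_right] using hA x y

/-- The real form `(A - u)² + ε²` of `(A - z) (A - z̄)` for `z = u + iε`. -/
noncomputable def quadShift (A : H →L[ℝ] H) (u ε : ℝ) : H →L[ℝ] H :=
  (A - u • 1) ^ 2 + ε ^ 2 • 1

theorem quadShift_apply (A : H →L[ℝ] H) (u ε : ℝ) (x : H) :
    quadShift A u ε x = (A - u • 1) ((A - u • 1) x) + ε ^ 2 • x := by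
  simp [quadShift, pow_two]

theorem isSymmetric_quadShift {A : H →L[ℝ] H} (hA : (A : H →ₗ[ℝ] H).IsSymmetric) (u ε : ℝ) :
    ((quadShift A u ε : H →L[ℝ] H) : H →ₗ[ℝ] H).IsSymmetric := fun x y => by
  have hP : ∀ x y : H, ⟪(A - u • 1) x, y⟫ = ⟪x, (A - u • 1) y⟫ :=
    isSymmetric_sub_smul_one hA u
  simp only [ContinuousLinearMap.coe_coe]
  rw [quadShift_apply, quadShift_apply, inner_add_left, inner_add_right, hP, hP,
    real_inner_smul_left, real_inner_smul_right]

theorem inner_quadShift_self {A : H →L[ℝ] H} (hA : (A : H →ₗ[ℝ] H).IsSymmetric) (u ε : ℝ)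
    (x : H) : ⟪quadShift A u ε x, x⟫ = ‖(A - u • 1) x‖ ^ 2 + ε ^ 2 * ‖x‖ ^ 2 := by
  have hP := isSymmetric_sub_smul_one hA u ((A - u • 1) x) x
  simp only [ContinuousLinearMap.coe_coe] at hP
  rw [quadShift_apply, inner_add_left, real_inner_smul_left, hP, real_inner_self_eq_norm_sq,
    real_inner_self_eq_norm_sq]

theorem norm_sub_smul_one_apply_le (A : H →L[ℝ] H) (u : ℝ) (x : H) :
    ‖(A - u • 1) x‖ ≤ (‖A‖ + |u|) * ‖x‖ := by
  calc ‖(A - u • 1) x‖ = ‖A x - u • x‖ := by simp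
    _ ≤ ‖A‖ * ‖x‖ + |u| * ‖x‖ := by
      grw [norm_sub_le, A.le_opNorm, norm_smul, Real.norm_eq_abs]
    _ = (‖A‖ + |u|) * ‖x‖ := by ring

theorem norm_one_sub_inv_smul_quadShift_lt_one {A : H →L[ℝ] H}
    (hA : (A : H →ₗ[ℝ] H).IsSymmetric) (u : ℝ) {ε M : ℝ} (hε : ε ≠ 0)
    (hM : (‖A‖ + |u|) ^ 2 + ε ^ 2 ≤ M) :
    ‖1 - M⁻¹ • quadShift A u ε‖ < 1 := by
  have hM0 : 0 < M := lt_of_lt_of_le (by positivity) hM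
  have hεM : ε ^ 2 ≤ M := by nlinarith [sq_nonneg (‖A‖ + |u|)]
  refine lt_of_le_of_lt ?_ (sub_lt_self 1 (by positivity : 0 < ε ^ 2 / M))
  have hB : ∀ x y : H, ⟪quadShift A u ε x, y⟫ = ⟪x, quadShift A u ε y⟫ :=
    isSymmetric_quadShift hA u ε
  refine ContinuousLinearMap.norm_le_of_abs_inner_le (fun x y => ?_) ?_ fun x => ?_
  · simp [inner_sub_left, inner_sub_right, real_inner_smul_left, real_inner_smul_right, hB x y]
  · rw [sub_nonneg, div_le_one hM0]
    exact hεM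
  · have hPx : ‖(A - u • 1) x‖ ^ 2 ≤ (‖A‖ + |u|) ^ 2 * ‖x‖ ^ 2 := by
      rw [← mul_pow]
      exact pow_le_pow_left₀ (norm_nonneg _) (norm_sub_smul_one_apply_le A u x) 2
    have hTx : ⟪(1 - M⁻¹ • quadShift A u ε) x, x⟫
        = ‖x‖ ^ 2 - (‖(A - u • 1) x‖ ^ 2 + ε ^ 2 * ‖x‖ ^ 2) / M := by
      simp [inner_sub_left, real_inner_smul_left, inner_quadShift_self hA, div_eq_inv_mul]
    have hQ : ‖(A - u • 1) x‖ ^ 2 + ε ^ 2 * ‖x‖ ^ 2 ≤ M * ‖x‖ ^ 2 := by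
      nlinarith [sq_nonneg ‖x‖]
    have hlow : (‖(A - u • 1) x‖ ^ 2 + ε ^ 2 * ‖x‖ ^ 2) / M ≤ ‖x‖ ^ 2 := by
      rwa [div_le_iff₀' hM0]
    have hup : ε ^ 2 * ‖x‖ ^ 2 / M ≤ (‖(A - u • 1) x‖ ^ 2 + ε ^ 2 * ‖x‖ ^ 2) / M := by
      gcongr
      exact le_add_of_nonneg_left (sq_nonneg _)
    rw [hTx, abs_of_nonneg (sub_nonneg.2 hlow)]
    calc _ ≤ ‖x‖ ^ 2 - ε ^ 2 * ‖x‖ ^ 2 / M := by linarith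
      _ = (1 - ε ^ 2 / M) * ‖x‖ ^ 2 := by ring

theorem quadShift_surjective [CompleteSpace H] {A : H →L[ℝ] H}
    (hA : (A : H →ₗ[ℝ] H).IsSymmetric) (u : ℝ) {ε : ℝ} (hε : ε ≠ 0) :
    Function.Surjective (quadShift A u ε) := by
  set M := (‖A‖ + |u|) ^ 2 + ε ^ 2
  have hM0 : M ≠ 0 := by positivity
  have hT := norm_one_sub_inv_smul_quadShift_lt_one hA u hε (M := M) le_rfl
  intro y
  refine ⟨(∑' n : ℕ, (1 - M⁻¹ • quadShift A u ε) ^ n) (M⁻¹ • y),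
    smul_right_injective H (inv_ne_zero hM0) ?_⟩
  have := congr($(mul_neg_geom_series _ hT) (M⁻¹ • y))
  rwa [sub_sub_cancel, mul_apply_eq_comp, one_apply_eq_self, smul_apply] at this

theorem hasSum_integral_pow_of_ae_abs_le {α : Type*} [MeasurableSpace α] {μ : Measure α}
    [IsFiniteMeasure μ] {g : α → ℝ} {r : ℝ} (hg : ∀ n : ℕ, Integrable (fun x => g x ^ n) μ)
    (hr₀ : 0 ≤ r) (hr : r < 1) (hgr : ∀ᵐ x ∂μ, |g x| ≤ r) :
    HasSum (fun n => ∫ x, g x ^ n ∂μ) (∫ x, (1 - g x)⁻¹ ∂μ) := by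
  have hsum : Summable fun n => ∫ x, ‖g x ^ n‖ ∂μ := by
    refine Summable.of_nonneg_of_le (fun n => integral_nonneg fun x => norm_nonneg (g x ^ n))
      (fun n => ?_) ((summable_geometric_of_lt_one hr₀ hr).mul_right (μ.real univ))
    calc ∫ x, ‖g x ^ n‖ ∂μ ≤ ∫ _, r ^ n ∂μ := by
          refine integral_mono_ae (hg n).norm (integrable_const (r ^ n)) ?_
          filter_upwards [hgr] with x hx
          simpa [abs_pow] using pow_le_pow_left₀ (abs_nonneg _) hx n
      _ = r ^ n * μ.real univ := by simp [mul_comm]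
  have hgeom : ∫ x, (1 - g x)⁻¹ ∂μ = ∫ x, ∑' n, g x ^ n ∂μ := by
    refine integral_congr_ae ?_
    filter_upwards [hgr] with x hx
    exact (tsum_geometric_of_abs_lt_one (hx.trans_lt hr)).symm
  rw [hgeom]
  exact hasSum_integral_of_summable_integral_norm hg hsum

theorem abs_one_sub_inv_mul_sq_add_sq_le {a u x ε : ℝ} (hε : ε ≠ 0) (hx : |x| ≤ a) :
    |1 - ((a + |u|) ^ 2 + ε ^ 2)⁻¹ * ((x - u) ^ 2 + ε ^ 2)|
      ≤ 1 - ε ^ 2 / ((a + |u|) ^ 2 + ε ^ 2) := by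
  set M := (a + |u|) ^ 2 + ε ^ 2
  have hM0 : 0 < M := by positivity
  have hxu : (x - u) ^ 2 ≤ (a + |u|) ^ 2 :=
    sq_le_sq' (by linarith [neg_abs_le (x - u), abs_sub x u])
      (by linarith [le_abs_self (x - u), abs_sub x u])
  have hlow : ε ^ 2 / M ≤ M⁻¹ * ((x - u) ^ 2 + ε ^ 2) := by
    rw [div_eq_inv_mul]; gcongr; exact le_add_of_nonneg_left (sq_nonneg _)
  have hup : M⁻¹ * ((x - u) ^ 2 + ε ^ 2) ≤ 1 := by
    rw [inv_mul_le_one₀ hM0]; linarith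
  rw [abs_of_nonneg (by linarith)]
  linarith

/-- `μ` is the spectral measure of `A` at `φ`, in the sense that it has the moments `⟪φ, Aⁿ φ⟫`. -/
def IsMomentMeasure (A : H →L[ℝ] H) (φ : H) (μ : Measure ℝ) : Prop :=
  ∀ n : ℕ, Integrable (fun x : ℝ => x ^ n) μ ∧ ⟪φ, (A ^ n) φ⟫ = ∫ x, x ^ n ∂μ

namespace IsMomentMeasure

variable {A : H →L[ℝ] H} {φ : H} {μ : Measure ℝ}

theorem isFiniteMeasure (hμ : IsMomentMeasure A φ μ) : IsFiniteMeasure μ := by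
  exact (integrable_const_iff.1 (by simpa using (hμ 0).1)).resolve_left one_ne_zero

theorem integrable_eval (hμ : IsMomentMeasure A φ μ) (p : ℝ[X]) :
    Integrable (fun x => p.eval x) μ := by
  induction p using Polynomial.induction_on' with
  | add p q hp hq =>
    simp only [eval_add]
    exact hp.add hq
  | monomial n a => simpa using (hμ n).1.const_mul a

theorem inner_aeval_apply (hμ : IsMomentMeasure A φ μ) (p : ℝ[X]) :
    ⟪φ, aeval A p φ⟫ = ∫ x, p.eval x ∂μ := by
  induction p using Polynomial.induction_on' with
  | add p q hp hq =>
    simp [inner_add_right, hp, hq, integral_add (hμ.integrable_eval p) (hμ.integrable_eval q)]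
  | monomial n a =>
    rw [aeval_monomial, Algebra.algebraMap_eq_smul_one, smul_mul_assoc, one_mul, smul_apply,
      real_inner_smul_right, (hμ n).2, ← integral_const_mul]
    simp

theorem integral_pow_le (hμ : IsMomentMeasure A φ μ) (n : ℕ) :
    ∫ x, x ^ n ∂μ ≤ ‖φ‖ ^ 2 * ‖A‖ ^ n := by
  rw [← (hμ n).2]
  calc ⟪φ, (A ^ n) φ⟫ ≤ ‖φ‖ * (‖A‖ ^ n * ‖φ‖) := by
        grw [real_inner_le_norm, ContinuousLinearMap.norm_pow_apply_le]
    _ = ‖φ‖ ^ 2 * ‖A‖ ^ n := by ring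

theorem measure_le_abs_eq_zero (hμ : IsMomentMeasure A φ μ) {R : ℝ} (hR : ‖A‖ < R) :
    μ {x | R ≤ |x|} = 0 := by
  have := hμ.isFiniteMeasure
  have hR0 : 0 < R := (norm_nonneg A).trans_lt hR
  have hbound : ∀ j : ℕ, μ.real {x | R ≤ |x|} ≤ ‖φ‖ ^ 2 * ((‖A‖ / R) ^ 2) ^ j := by
    intro j
    have hmarkov := mul_meas_ge_le_integral_of_nonneg
      (Filter.Eventually.of_forall fun x => (even_two_mul j).pow_nonneg x) (hμ (2 * j)).1
      (R ^ (2 * j))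
    have hsub : {x : ℝ | R ≤ |x|} ⊆ {x | R ^ (2 * j) ≤ x ^ (2 * j)} := fun x hx => by
      simpa [(even_two_mul j).pow_abs] using pow_le_pow_left₀ hR0.le hx (2 * j)
    have := (mul_le_mul_of_nonneg_left (measureReal_mono hsub) (by positivity)).trans
      (hmarkov.trans (hμ.integral_pow_le (2 * j)))
    rwa [← le_div_iff₀' (by positivity), mul_div_assoc, ← div_pow, pow_mul] at this
  have hlim : Filter.Tendsto (fun j : ℕ => ‖φ‖ ^ 2 * ((‖A‖ / R) ^ 2) ^ j) Filter.atTop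
      (nhds 0) := by
    simpa using (tendsto_pow_atTop_nhds_zero_of_lt_one (by positivity)
      (by rw [sq_lt_one_iff₀ (by positivity), div_lt_one hR0]; exact hR)).const_mul (‖φ‖ ^ 2)
  exact (measureReal_eq_zero_iff).1 (le_antisymm (ge_of_tendsto' hlim hbound) measureReal_nonneg)

theorem ae_abs_le (hμ : IsMomentMeasure A φ μ) : ∀ᵐ x ∂μ, |x| ≤ ‖A‖ := by
  have hlt : ∀ᵐ x ∂μ, ∀ k : ℕ, |x| < ‖A‖ + 1 / (k + 1) := by
    refine ae_all_iff.2 fun k => ?_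
    simpa [measure_eq_zero_iff_ae_notMem] using
      hμ.measure_le_abs_eq_zero (lt_add_of_pos_right ‖A‖ (Nat.one_div_pos_of_nat (n := k)))
  filter_upwards [hlt] with x hx
  exact ge_of_tendsto' (by simpa using tendsto_one_div_add_atTop_nhds_zero_nat.const_add ‖A‖)
    fun k => (hx k).le

theorem integrable_pow_one_sub_mul (hμ : IsMomentMeasure A φ μ) (u ε c : ℝ) (n : ℕ) :
    Integrable (fun x => (1 - c * ((x - u) ^ 2 + ε ^ 2)) ^ n) μ := by
  have h := hμ.integrable_eval ((1 - C c * ((X - C u) ^ 2 + C (ε ^ 2))) ^ n)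
  simp only [eval_pow, eval_sub, eval_one, eval_mul, eval_C, eval_add, eval_X] at h
  exact h

theorem inner_pow_one_sub_smul_quadShift (hμ : IsMomentMeasure A φ μ) (u ε c : ℝ) (n : ℕ) :
    ⟪φ, ((1 - c • quadShift A u ε) ^ n) φ⟫ = ∫ x, (1 - c * ((x - u) ^ 2 + ε ^ 2)) ^ n ∂μ := by
  have hp : aeval A (1 - C c * ((X - C u) ^ 2 + C (ε ^ 2))) = 1 - c • quadShift A u ε := by
    simp [quadShift, Algebra.algebraMap_eq_smul_one, smul_smul, _root_.smul_pow]
  rw [← hp, ← map_pow, hμ.inner_aeval_apply]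
  simp

theorem integral_inv_sq_add_sq_eq_inner [CompleteSpace H] (hμ : IsMomentMeasure A φ μ)
    (hA : (A : H →ₗ[ℝ] H).IsSymmetric) {u ε : ℝ} (hε : ε ≠ 0) {w : H}
    (hw : quadShift A u ε w = φ) :
    ∫ x, ((x - u) ^ 2 + ε ^ 2)⁻¹ ∂μ = ⟪φ, w⟫ := by
  have := hμ.isFiniteMeasure
  set M := (‖A‖ + |u|) ^ 2 + ε ^ 2
  have hM0 : 0 < M := by positivity
  -- Expand `quadShift⁻¹ = M⁻¹ ∑ (1 - M⁻¹ quadShift)ⁿ`; on the support `[-‖A‖, ‖A‖]` of `μ` the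
  -- scalar series is dominated by `∑ (1 - ε² / M)ⁿ`, so it can be integrated termwise.
  have hop : HasSum (fun n => M⁻¹ * ∫ x, (1 - M⁻¹ * ((x - u) ^ 2 + ε ^ 2)) ^ n ∂μ) ⟪φ, w⟫ := by
    have hT := norm_one_sub_inv_smul_quadShift_lt_one hA u hε (M := M) le_rfl
    simpa only [innerSL_apply_apply, map_smul, real_inner_smul_right, smul_eq_mul,
      hμ.inner_pow_one_sub_smul_quadShift] using
      (hasSum_pow_apply_of_one_sub_apply_eq hT (y := M⁻¹ • φ) (by simp [hw])).mapL
        (innerSL ℝ φ)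
  have hεM : ε ^ 2 / M ≤ 1 := (div_le_one hM0).2 (le_add_of_nonneg_left (sq_nonneg _))
  have hint := hasSum_integral_pow_of_ae_abs_le (hμ.integrable_pow_one_sub_mul u ε M⁻¹)
    (sub_nonneg.2 hεM) (sub_lt_self 1 (by positivity))
    (hμ.ae_abs_le.mono fun x hx => abs_one_sub_inv_mul_sq_add_sq_le hε hx)
  simp only [sub_sub_cancel, mul_inv, inv_inv, integral_const_mul] at hint
  rw [← (hint.mul_left M⁻¹).unique hop, inv_mul_cancel_left₀ hM0.ne']

end IsMomentMeasure

theorem quadShift_apply_of_pair {A : H →L[ℝ] H} {u ε : ℝ} {φ w₁ w₂ : H}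
    (h₁ : (A - u • 1) w₁ + ε • w₂ = φ) (h₂ : (A - u • 1) w₂ = ε • w₁) :
    quadShift A u ε w₂ = ε • φ := by
  rw [quadShift_apply, h₂, map_smul, ← h₁]
  module

theorem exists_quadShift_add_rankOne_apply_eq {A : H →L[ℝ] H} {φ σ : H} {u ε : ℝ} (hε : ε ≠ 0)
    (hσ : quadShift A u ε σ = φ) (l : ℝ)
    (hD : (1 + l * ⟪φ, (A - u • 1) σ⟫) ^ 2 + (l * ε * ⟪φ, σ⟫) ^ 2 ≠ 0) :
    ∃ w, quadShift (A + l • rankOne ℝ φ φ) u ε w = φ ∧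
      ⟪φ, w⟫ = ⟪φ, σ⟫ / ((1 + l * ⟪φ, (A - u • 1) σ⟫) ^ 2 + (l * ε * ⟪φ, σ⟫) ^ 2) := by
  set P := A - u • 1
  set p := ⟪φ, σ⟫
  set q := ⟪φ, P σ⟫
  set D := (1 + l * q) ^ 2 + (l * ε * p) ^ 2
  set c₁ := (1 + l * q) / D
  set c₂ := -(l * ε * p) / D
  have hP₁ : P (P σ) + ε • (ε • σ) = φ := by rw [← hσ, quadShift_apply, smul_smul, sq]
  have hQ : ∀ x, (A + l • rankOne ℝ φ φ - u • 1) x = P x + (l * ⟪φ, x⟫) • φ := fun x => by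
    simp [P, mul_smul]; abel
  -- `w₁ + i w₂ = (c₁ + i c₂) (P σ + i ε σ)` is the real form of the Aronszajn–Krein identity
  -- `(A_l - z)⁻¹ φ = (A - z)⁻¹ φ / (1 + l F(z))`, where `(A - z)⁻¹ φ = (P + iε) σ` and
  -- `F(z) = q + iεp`.
  set w₁ := c₁ • P σ - c₂ • (ε • σ)
  set w₂ := c₁ • (ε • σ) + c₂ • P σ
  have hw₁ : ⟪φ, w₁⟫ = c₁ * q - c₂ * (ε * p) := by
    simp [w₁, inner_sub_right, real_inner_smul_right, q, p]
  have hw₂ : ⟪φ, w₂⟫ = c₁ * (ε * p) + c₂ * q := by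
    simp [w₂, inner_add_right, real_inner_smul_right, q, p]
  have s₁ : c₁ + l * (c₁ * q - c₂ * (ε * p)) = 1 := by
    simp only [c₁, c₂]; field_simp; ring
  have s₂ : c₂ + l * (c₁ * (ε * p) + c₂ * q) = 0 := by
    simp only [c₁, c₂]; field_simp; ring
  refine ⟨ε⁻¹ • w₂, ?_, ?_⟩
  · rw [map_smul, quadShift_apply_of_pair (w₁ := w₁), inv_smul_smul₀ hε]
    · rw [hQ, hw₁]
      simp only [w₁, w₂, map_sub, map_smul]
      linear_combination (norm := module) s₁ • φ + c₁ • hP₁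
    · rw [hQ, hw₂]
      simp only [w₁, w₂, map_add, map_smul]
      linear_combination (norm := module) s₂ • φ + c₂ • hP₁
  · rw [real_inner_smul_right, hw₂]
    simp only [c₁, c₂]; field_simp; ring

theorem exists_integral_cauchyPDFReal_eq [CompleteSpace H] {A : H →L[ℝ] H}
    (hA : (A : H →ₗ[ℝ] H).IsSymmetric) {φ : H} (hφ : φ ≠ 0) {μ : ℝ → Measure ℝ}
    (hμ : ∀ l, IsMomentMeasure (A + l • rankOne ℝ φ φ) φ (μ l)) (u : ℝ) {γ : ℝ≥0}
    (hγ : γ ≠ 0) :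
    ∃ (m : ℝ) (h : ℝ≥0), h ≠ 0 ∧ ∀ l, ∫ x, cauchyPDFReal u γ x ∂(μ l) = cauchyPDFReal m h l := by
  have hε : (γ : ℝ) ≠ 0 := by exact_mod_cast hγ
  obtain ⟨σ, hσ⟩ := quadShift_surjective hA u hε φ
  set p := ⟪φ, σ⟫
  set q := ⟪φ, (A - u • 1) σ⟫
  have hp : 0 < p := by
    have hσ0 : σ ≠ 0 := by rintro rfl; exact hφ (by simpa using hσ.symm)
    rw [show p = ⟪quadShift A u γ σ, σ⟫ by rw [hσ], inner_quadShift_self hA]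
    positivity
  -- The Cauchy parameters are `m + ih = -1 / F(z)` for `F(z) = q + iγp`.
  set α := q ^ 2 + (γ * p) ^ 2
  have hα : 0 < α := by positivity
  set h : ℝ≥0 := ⟨γ * p / α, by positivity⟩
  have hh : (h : ℝ) = γ * p / α := rfl
  refine ⟨-q / α, h, NNReal.coe_ne_zero.1 (by rw [hh]; positivity), fun l => ?_⟩
  have hD : 0 < (1 + l * q) ^ 2 + (l * γ * p) ^ 2 := by
    rcases eq_or_ne l 0 with rfl | hl
    · simp
    · positivity
  obtain ⟨w, hw, hφw⟩ := exists_quadShift_add_rankOne_apply_eq hε hσ l hD.ne'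
  have hAl : ((A + l • rankOne ℝ φ φ : H →L[ℝ] H) : H →ₗ[ℝ] H).IsSymmetric := by
    simpa using hA.add ((isSymmetric_rankOne_self φ).smul (by simp))
  have hφw' : ⟪φ, w⟫ = p / ((1 + l * q) ^ 2 + (l * γ * p) ^ 2) := hφw
  have hdenom : (l - -q / α) ^ 2 + (γ * p / α) ^ 2 = ((1 + l * q) ^ 2 + (l * γ * p) ^ 2) / α := by
    field_simp
    simp only [α]
    ring
  simp only [cauchyPDFReal_def]
  rw [integral_const_mul, (hμ l).integral_inv_sq_add_sq_eq_inner hAl hε hw, hφw', hh, hdenom]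
  field_simp

theorem lintegral_ofReal_le_mul_of_measure_lt_le {α : Type*} [MeasurableSpace α]
    {ν ρ : Measure α} {f : α → ℝ} (hf₀ : 0 ≤ f) (hf : Measurable f) {c : ℝ≥0∞}
    (h : ∀ t > 0, ν {x | t < f x} ≤ c * ρ {x | t < f x}) :
    ∫⁻ x, ENNReal.ofReal (f x) ∂ν ≤ c * ∫⁻ x, ENNReal.ofReal (f x) ∂ρ := by
  rw [lintegral_eq_lintegral_meas_lt ν (ae_of_all _ hf₀) hf.aemeasurable,
    lintegral_eq_lintegral_meas_lt ρ (ae_of_all _ hf₀) hf.aemeasurable,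
    ← lintegral_const_mul (μ := volume.restrict (Ioi 0)) (f := fun t => ρ {x | t < f x}) c
      (Antitone.measurable fun s t hst => measure_mono fun x hx => lt_of_le_of_lt hst hx)]
  exact setLIntegral_mono' measurableSet_Ioi h

theorem setOf_lt_cauchyPDFReal (x₀ : ℝ) {γ : ℝ≥0} (hγ : γ ≠ 0) {t : ℝ} (ht : 0 < t) :
    {x | t < cauchyPDFReal x₀ γ x} = Metric.ball x₀ √(γ / (π * t) - γ ^ 2) := by
  ext x
  have hγ0 : (0 : ℝ) < γ := by positivity
  have hD : 0 < (x - x₀) ^ 2 + (γ : ℝ) ^ 2 := by positivity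
  rw [mem_ofPred_eq, Metric.mem_ball, Real.dist_eq, Real.lt_sqrt (abs_nonneg _), sq_abs,
    lt_sub_iff_add_lt, lt_div_iff₀ (by positivity), cauchyPDFReal_def, ← div_eq_mul_inv,
    inv_mul_eq_div, div_div, lt_div_iff₀ (by positivity)]
  constructor <;> intro h <;> linarith

theorem measure_ball_le_of_measure_Icc_le {ν : Measure ℝ} {K : ℝ}
    (hν : ∀ a b, a ≤ b → ν (Icc a b) ≤ ENNReal.ofReal (K * (b - a))) (x : ℝ) {r : ℝ}
    (hr : 0 ≤ r) : ν (Metric.ball x r) ≤ ENNReal.ofReal K * volume (Metric.ball x r) := by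
  calc ν (Metric.ball x r) ≤ ν (Icc (x - r) (x + r)) := by
        rw [Real.ball_eq_Ioo]; exact measure_mono Ioo_subset_Icc_self
    _ ≤ ENNReal.ofReal (K * (x + r - (x - r))) := hν _ _ (by linarith)
    _ = ENNReal.ofReal K * volume (Metric.ball x r) := by
      rw [Real.volume_ball, ← ENNReal.ofReal_mul' (by linarith)]; ring_nf

theorem lintegral_cauchyPDF_le {ν : Measure ℝ} {K : ℝ}
    (hν : ∀ a b, a ≤ b → ν (Icc a b) ≤ ENNReal.ofReal (K * (b - a))) (x₀ : ℝ) {γ : ℝ≥0}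
    (hγ : γ ≠ 0) : ∫⁻ x, cauchyPDF x₀ γ x ∂ν ≤ ENNReal.ofReal K := by
  calc ∫⁻ x, cauchyPDF x₀ γ x ∂ν ≤ ENNReal.ofReal K * ∫⁻ x, cauchyPDF x₀ γ x := by
        refine lintegral_ofReal_le_mul_of_measure_lt_le (fun x => (cauchyPDF_pos x₀ hγ x).le)
          (measurable_cauchyPDFReal x₀ γ) fun t ht => ?_
        rw [setOf_lt_cauchyPDFReal x₀ hγ ht]
        exact measure_ball_le_of_measure_Icc_le hν x₀ (Real.sqrt_nonneg _)
    _ = ENNReal.ofReal K := by rw [lintegral_cauchyPDF_eq_one x₀ hγ, mul_one]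

theorem measure_Icc_le_integral_cauchyPDFReal (μ : Measure ℝ) [IsFiniteMeasure μ] (u : ℝ)
    {γ : ℝ≥0} (hγ : γ ≠ 0) :
    μ (Icc (u - γ) (u + γ)) ≤ ENNReal.ofReal (2 * π * γ * ∫ x, cauchyPDFReal u γ x ∂μ) := by
  have hγ0 : (0 : ℝ) < γ := by positivity
  have hbound : ∀ x, cauchyPDFReal u γ x ≤ π⁻¹ * γ * ((γ : ℝ) ^ 2)⁻¹ := fun x => by
    rw [cauchyPDFReal_def]
    gcongr
    exact le_add_of_nonneg_left (sq_nonneg _)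
  have hint : Integrable (cauchyPDFReal u γ) μ :=
    Integrable.of_bound (measurable_cauchyPDFReal u γ).aestronglyMeasurable _
      (ae_of_all _ fun x => by
        rw [Real.norm_of_nonneg (cauchyPDF_pos u hγ x).le]; exact hbound x)
  have hsub : Icc (u - γ) (u + γ) ⊆ {x | 1 ≤ ENNReal.ofReal (2 * π * γ * cauchyPDFReal u γ x)} := by
    intro x hx
    have hxu : (x - u) ^ 2 ≤ (γ : ℝ) ^ 2 :=
      sq_le_sq' (by linarith [hx.1]) (by linarith [hx.2])
    rw [mem_ofPred_eq, ENNReal.one_le_ofReal, cauchyPDFReal_def]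
    rw [show 2 * π * γ * (π⁻¹ * γ * ((x - u) ^ 2 + (γ : ℝ) ^ 2)⁻¹)
      = 2 * γ ^ 2 / ((x - u) ^ 2 + (γ : ℝ) ^ 2) by field_simp]
    rw [one_le_div (by positivity)]
    linarith
  calc μ (Icc (u - γ) (u + γ))
      ≤ μ {x | 1 ≤ ENNReal.ofReal (2 * π * γ * cauchyPDFReal u γ x)} := measure_mono hsub
    _ ≤ ∫⁻ x, ENNReal.ofReal (2 * π * γ * cauchyPDFReal u γ x) ∂μ := by
      simpa using mul_meas_ge_le_lintegral₀
        ((measurable_cauchyPDFReal u γ).const_mul _).ennreal_ofReal.aemeasurable 1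
    _ = ENNReal.ofReal (2 * π * γ * ∫ x, cauchyPDFReal u γ x ∂μ) := by
      rw [← integral_const_mul, ofReal_integral_eq_lintegral_ofReal (hint.const_mul _)
        (ae_of_all _ fun x => by have := cauchyPDF_pos u hγ x; positivity)]

theorem le_ofReal_mul_sub_of_forall_Icc {f : Set ℝ → ℝ≥0∞} (hf : Monotone f) {C : ℝ}
    (h : ∀ u γ : ℝ, 0 < γ → f (Icc (u - γ) (u + γ)) ≤ ENNReal.ofReal (C * (2 * γ)))
    {a b : ℝ} (hab : a ≤ b) : f (Icc a b) ≤ ENNReal.ofReal (C * (b - a)) := by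
  have hlim : Filter.Tendsto (fun δ : ℝ => ENNReal.ofReal (C * (2 * ((b - a) / 2 + δ))))
      (nhdsWithin 0 (Ioi 0)) (nhds (ENNReal.ofReal (C * (b - a)))) := by
    have : Continuous fun δ : ℝ => ENNReal.ofReal (C * (2 * ((b - a) / 2 + δ))) :=
      ENNReal.continuous_ofReal.comp (by fun_prop)
    simpa [mul_div_cancel₀] using (this.tendsto 0).mono_left nhdsWithin_le_nhds
  refine ge_of_tendsto hlim ?_
  filter_upwards [self_mem_nhdsWithin] with δ (hδ : 0 < δ)
  refine (hf (Icc_subset_Icc ?_ ?_)).trans (h ((a + b) / 2) _ (by linarith)) <;> linarith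

/-- If `ν` is uniformly `1`-Hölder continuous with constant `K`, then the averaged measure
`κ(B) = ∫ μ_λ(B) dν(λ)` is uniformly `1`-Hölder continuous with a constant depending only
on `K`. -/
theorem stmt_12 (K : ℝ) :
    ∃ K' : ℝ, ∀ (H : Type) (_ : NormedAddCommGroup H),
      ∀ (_ : @InnerProductSpace ℝ H _ _), ∀ (_ : CompleteSpace H),
      ∀ (A : H →L[ℝ] H), IsSelfAdjoint A → ∀ φ : H, ‖φ‖ = 1 →
      ∀ μ : ℝ → Measure ℝ, (∀ l : ℝ, IsProbabilityMeasure (μ l)) →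
      (∀ (l : ℝ) (n : ℕ),
        Integrable (fun x : ℝ => x ^ n) (μ l) ∧
        ⟪φ, (((A + l • ((innerSL ℝ φ).smulRight φ)) ^ n) φ)⟫ = ∫ x, x ^ n ∂(μ l)) →
      ∀ ν : Measure ℝ,
      (∀ a b : ℝ, a ≤ b → ν (Set.Icc a b) ≤ ENNReal.ofReal (K * (b - a))) →
      ∀ a b : ℝ, a ≤ b →
        (∫⁻ l, μ l (Set.Icc a b) ∂ν) ≤ ENNReal.ofReal (K' * (b - a)) := by
  refine ⟨π * K, fun H _ _ _ A hA φ hφ μ _ hμ ν hν a b hab => ?_⟩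
  have hφ0 : φ ≠ 0 := norm_ne_zero_iff.1 (by rw [hφ]; exact one_ne_zero)
  refine le_ofReal_mul_sub_of_forall_Icc (f := fun s => ∫⁻ l, μ l s ∂ν)
    (fun s t hst => lintegral_mono fun l => measure_mono hst) (fun u γ hγ => ?_) hab
  lift γ to ℝ≥0 using hγ.le
  have hγ0 : γ ≠ 0 := by exact_mod_cast hγ.ne'
  obtain ⟨m, h, hh, hμh⟩ := exists_integral_cauchyPDFReal_eq hA.isSymmetric hφ0 hμ u hγ0
  calc ∫⁻ l, μ l (Icc (u - γ) (u + γ)) ∂ν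
      ≤ ∫⁻ l, ENNReal.ofReal (2 * π * γ) * cauchyPDF m h l ∂ν := lintegral_mono fun l =>
        (measure_Icc_le_integral_cauchyPDFReal (μ l) u hγ0).trans_eq
          (by rw [hμh l, ENNReal.ofReal_mul (by positivity), cauchyPDF_def])
    _ = ENNReal.ofReal (2 * π * γ) * ∫⁻ l, cauchyPDF m h l ∂ν :=
        lintegral_const_mul _ (measurable_cauchyPDF m h)
    _ ≤ ENNReal.ofReal (2 * π * γ) * ENNReal.ofReal K := by
        gcongr; exact lintegral_cauchyPDF_le hν m hh
    _ = ENNReal.ofReal (π * K * (2 * γ)) := by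
        rw [← ENNReal.ofReal_mul (by positivity)]; ring_nf
end

section
/- Let η be a probability Borel measure on ℝ. Then for all x ∈ ℝ and ε > 0, max{ P_η(x+iε), |Q_η(x+iε)| } ≤ (2/ε) Σ_{n=0}^∞ 2^{−n} η((x − 2^{n+1}ε, x + 2^{n+1}ε)), where P_η(x+iε) = ∫ ε/((y−x)²+ε²) dη(y) and Q_η(x+iε) = ∫ (y−x)/((y−x)²+ε²) dη(y). -/
/-!
Both kernels are bounded by `(max |y - x| ε)⁻¹`. Cutting the line into the dyadic shells
`2ⁿ ε ≤ |y - x| < 2ⁿ⁺¹ ε`, this majorant is at most `2⁻ⁿ / ε` on the `n`-th shell, which lies in the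
ball of radius `2ⁿ⁺¹ ε` about `x`; integrating the resulting pointwise bound by a sum of indicators
of these balls gives the dyadic sum.
-/

open MeasureTheory Set Metric

lemma exists_pow_two_mul_le_max_lt {t ε : ℝ} (hε : 0 < ε) :
    ∃ m : ℕ, 2 ^ m * ε ≤ max t ε ∧ t < 2 ^ (m + 1) * ε := by
  obtain ⟨m, hlo, hhi⟩ :=
    exists_nat_pow_near ((one_le_div hε).2 (le_max_right t ε)) (one_lt_two : (1 : ℝ) < 2)
  exact ⟨m, (le_div_iff₀ hε).1 hlo, (le_max_left t ε).trans_lt ((div_lt_iff₀ hε).1 hhi)⟩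

lemma mul_max_le_sq_add_sq (a b : ℝ) : a * max a b ≤ a ^ 2 + b ^ 2 := by
  rcases le_total a b with hab | hab
  · rw [max_eq_right hab]
    nlinarith [sq_nonneg (a - b)]
  · rw [max_eq_left hab]
    nlinarith

lemma div_sq_add_sq_le_inv_max {a b c : ℝ} (hb : 0 < b) (hc : c * max |a| b ≤ a ^ 2 + b ^ 2) :
    c / (a ^ 2 + b ^ 2) ≤ (max |a| b)⁻¹ := by
  have hM : 0 < max |a| b := lt_max_of_lt_right hb
  rw [div_le_iff₀ (by positivity), inv_mul_eq_div, le_div_iff₀ hM]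
  exact hc

lemma summable_zpow_neg_two_mul_toReal {X : Type*} [MeasurableSpace X] (η : Measure X)
    [IsFiniteMeasure η] (s : ℕ → Set X) :
    Summable fun n : ℕ => (2 : ℝ) ^ (-(n : ℤ)) * (η (s n)).toReal := by
  have hgeom : Summable fun n : ℕ => (2 : ℝ) ^ (-(n : ℤ)) * (η univ).toReal := by
    simpa [zpow_neg, zpow_natCast, inv_pow] using
      summable_geometric_two.mul_right (η univ).toReal
  refine hgeom.of_nonneg_of_le (fun n => by positivity) fun n => ?_
  gcongr
  · exact measure_ne_top η univ
  · exact subset_univ _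

section DyadicBalls

variable {X : Type*} [PseudoMetricSpace X]

lemma ofReal_inv_max_dist_le_tsum_indicator_ball (x y : X) {ε : ℝ} (hε : 0 < ε) :
    ENNReal.ofReal (max (dist y x) ε)⁻¹ ≤
      ∑' n : ℕ, (ball x (2 ^ (n + 1) * ε)).indicator
        (fun _ => ENNReal.ofReal (ε⁻¹ * (2 : ℝ) ^ (-(n : ℤ)))) y := by
  obtain ⟨m, hlo, hhi⟩ := exists_pow_two_mul_le_max_lt (t := dist y x) hε
  calc ENNReal.ofReal (max (dist y x) ε)⁻¹
      ≤ ENNReal.ofReal (ε⁻¹ * (2 : ℝ) ^ (-(m : ℤ))) := by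
        apply ENNReal.ofReal_le_ofReal
        calc (max (dist y x) ε)⁻¹ ≤ (2 ^ m * ε)⁻¹ := inv_anti₀ (by positivity) hlo
          _ = ε⁻¹ * (2 : ℝ) ^ (-(m : ℤ)) := by rw [zpow_neg, zpow_natCast, mul_inv, mul_comm]
    _ = (ball x (2 ^ (m + 1) * ε)).indicator
          (fun _ => ENNReal.ofReal (ε⁻¹ * (2 : ℝ) ^ (-(m : ℤ)))) y :=
        (indicator_of_mem (mem_ball.2 hhi) fun _ => _).symm
    _ ≤ _ := ENNReal.le_tsum m

lemma continuous_inv_max_dist (x : X) {ε : ℝ} (hε : 0 < ε) :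
    Continuous fun y => (max (dist y x) ε)⁻¹ :=
  ((continuous_id.dist continuous_const).max continuous_const).inv₀
    fun _ => (lt_max_of_lt_right hε).ne'

lemma inv_max_dist_nonneg (x y : X) {ε : ℝ} (hε : 0 < ε) : 0 ≤ (max (dist y x) ε)⁻¹ :=
  inv_nonneg.2 (hε.le.trans (le_max_right _ _))

variable [MeasurableSpace X] [OpensMeasurableSpace X]

lemma lintegral_inv_max_dist_le_tsum (η : Measure X) (x : X) {ε : ℝ} (hε : 0 < ε) :
    ∫⁻ y, ENNReal.ofReal (max (dist y x) ε)⁻¹ ∂η ≤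
      ∑' n : ℕ, ENNReal.ofReal (ε⁻¹ * (2 : ℝ) ^ (-(n : ℤ))) * η (ball x (2 ^ (n + 1) * ε)) :=
  calc ∫⁻ y, ENNReal.ofReal (max (dist y x) ε)⁻¹ ∂η
      ≤ ∫⁻ y, ∑' n : ℕ, (ball x (2 ^ (n + 1) * ε)).indicator
          (fun _ => ENNReal.ofReal (ε⁻¹ * (2 : ℝ) ^ (-(n : ℤ)))) y ∂η :=
        lintegral_mono fun y => ofReal_inv_max_dist_le_tsum_indicator_ball x y hε
    _ = _ := by
        rw [lintegral_tsum fun n => (measurable_const.indicator measurableSet_ball).aemeasurable]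
        simp only [lintegral_indicator_const measurableSet_ball]

lemma integral_inv_max_dist_le_tsum (η : Measure X) [IsFiniteMeasure η] (x : X) {ε : ℝ}
    (hε : 0 < ε) :
    ∫ y, (max (dist y x) ε)⁻¹ ∂η ≤
      ε⁻¹ * ∑' n : ℕ, (2 : ℝ) ^ (-(n : ℤ)) * (η (ball x (2 ^ (n + 1) * ε))).toReal := by
  set a : ℕ → ℝ := fun n => (2 : ℝ) ^ (-(n : ℤ)) * (η (ball x (2 ^ (n + 1) * ε))).toReal
  have ha : Summable a := summable_zpow_neg_two_mul_toReal η _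
  have ha₀ : ∀ n, 0 ≤ a n := fun n => by positivity
  rw [integral_eq_lintegral_of_nonneg_ae
    (Filter.Eventually.of_forall fun y => inv_max_dist_nonneg x y hε)
    (continuous_inv_max_dist x hε).aestronglyMeasurable]
  refine ENNReal.toReal_le_of_le_ofReal (mul_nonneg (inv_nonneg.2 hε.le) (tsum_nonneg ha₀)) ?_
  calc ∫⁻ y, ENNReal.ofReal (max (dist y x) ε)⁻¹ ∂η
      ≤ ∑' n : ℕ, ENNReal.ofReal (ε⁻¹ * (2 : ℝ) ^ (-(n : ℤ))) * η (ball x (2 ^ (n + 1) * ε)) :=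
        lintegral_inv_max_dist_le_tsum η x hε
    _ = ∑' n : ℕ, ENNReal.ofReal (ε⁻¹ * a n) := by
        refine tsum_congr fun n => ?_
        rw [← mul_assoc, ENNReal.ofReal_mul' ENNReal.toReal_nonneg,
          ENNReal.ofReal_toReal (measure_ne_top η _)]
    _ = ENNReal.ofReal (ε⁻¹ * ∑' n, a n) := by
        rw [← tsum_mul_left, ENNReal.ofReal_tsum_of_nonneg
          (fun n => mul_nonneg (inv_nonneg.2 hε.le) (ha₀ n)) (ha.mul_left _)]

lemma integral_le_tsum_measure_ball (η : Measure X) [IsFiniteMeasure η] (x : X) {ε : ℝ}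
    (hε : 0 < ε) {f : X → ℝ} (hf₀ : ∀ y, 0 ≤ f y) (hf : ∀ y, f y ≤ (max (dist y x) ε)⁻¹) :
    ∫ y, f y ∂η ≤
      ε⁻¹ * ∑' n : ℕ, (2 : ℝ) ^ (-(n : ℤ)) * (η (ball x (2 ^ (n + 1) * ε))).toReal := by
  refine (integral_mono_of_nonneg (Filter.Eventually.of_forall hf₀) ?_
    (Filter.Eventually.of_forall hf)).trans (integral_inv_max_dist_le_tsum η x hε)
  refine Integrable.of_bound (continuous_inv_max_dist x hε).aestronglyMeasurable ε⁻¹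
    (Filter.Eventually.of_forall fun y => ?_)
  rw [Real.norm_of_nonneg (inv_max_dist_nonneg x y hε)]
  exact inv_anti₀ hε (le_max_right _ _)

end DyadicBalls

theorem stmt_15 (η : Measure ℝ) [IsProbabilityMeasure η] (x ε : ℝ) (hε : 0 < ε) :
    max (∫ y, ε / ((y - x) ^ 2 + ε ^ 2) ∂η) |∫ y, (y - x) / ((y - x) ^ 2 + ε ^ 2) ∂η|
      ≤ (2 / ε) * ∑' n : ℕ, (2 : ℝ) ^ (-(n : ℤ)) *
          (η (Set.Ioo (x - 2 ^ (n + 1) * ε) (x + 2 ^ (n + 1) * ε))).toReal := by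
  have hD : ∀ y, 0 < (y - x) ^ 2 + ε ^ 2 := fun y => by positivity
  have hP : ∀ y, ε / ((y - x) ^ 2 + ε ^ 2) ≤ (max (dist y x) ε)⁻¹ := fun y => by
    rw [Real.dist_eq]
    refine div_sq_add_sq_le_inv_max hε ?_
    simpa [max_comm, add_comm, sq_abs] using mul_max_le_sq_add_sq ε |y - x|
  have hQ : ∀ y, |(y - x) / ((y - x) ^ 2 + ε ^ 2)| ≤ (max (dist y x) ε)⁻¹ := fun y => by
    rw [Real.dist_eq, abs_div, abs_of_pos (hD y)]
    refine div_sq_add_sq_le_inv_max hε ?_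
    simpa [sq_abs] using mul_max_le_sq_add_sq |y - x| ε
  have hbound : ∀ {f : ℝ → ℝ}, (∀ y, 0 ≤ f y) → (∀ y, f y ≤ (max (dist y x) ε)⁻¹) →
      ∫ y, f y ∂η ≤ (2 / ε) * ∑' n : ℕ, (2 : ℝ) ^ (-(n : ℤ)) *
        (η (Set.Ioo (x - 2 ^ (n + 1) * ε) (x + 2 ^ (n + 1) * ε))).toReal := fun hf₀ hf => by
    simp only [← Real.ball_eq_Ioo]
    refine (integral_le_tsum_measure_ball η x hε hf₀ hf).trans ?_
    gcongr
    rw [inv_eq_one_div]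
    gcongr
    norm_num
  exact max_le (hbound (fun y => (div_pos hε (hD y)).le) hP)
    (abs_integral_le_integral_abs.trans (hbound (fun y => abs_nonneg _) hQ))
end

section
/- Let μ be a Borel probability measure on ℝ, 0 < β < 1, and x ∈ ℝ with M_μ(x;δ) ≤ Λ δ^β for all δ > 0. Then |F_μ(x+iε)| ≤ (2/ε) Σ_{n=0}^∞ 2^{−n} M_μ(x; 2^{n+1}ε) ≤ Λ · 2^{2+β} (1 − 2^{β−1})^{-1} ε^{β−1} for all ε > 0, where F_μ is the Borel transform. -/
/-!
Split ℝ into the dyadic shells around `x` at scale `ε`: if `y` lies in the `n`-th interval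
`|y - x| < 2^(n+1) ε` but not in the previous one, then `|y - (x + iε)| ≥ 2^n ε`, so
`|y - (x + iε)|⁻¹` is dominated by `(2/ε) ∑ₙ 2^(-n) 1_{|y - x| < 2^(n+1) ε}`;
integrating gives the first bound. The mass bound turns the `n`-th term into `Λ 2^β ε^β (2^(β-1))^n`, a
geometric series with ratio `2^(β-1) < 1`.
-/

open MeasureTheory Set

theorem norm_integral_le_tsum_mul_measure {α E : Type*} [MeasurableSpace α]
    [NormedAddCommGroup E] [NormedSpace ℝ E] {μ : Measure α} [IsFiniteMeasure μ]
    {f : α → E} {s : ℕ → Set α} {c : ℕ → ℝ} (hs : ∀ n, MeasurableSet (s n))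
    (hc : ∀ n, 0 ≤ c n) (hc_sum : Summable c)
    (hf : ∀ y, ∃ n, y ∈ s n ∧ ‖f y‖ ≤ c n) :
    ‖∫ y, f y ∂μ‖ ≤ ∑' n, c n * (μ (s n)).toReal := by
  have hsum : Summable fun n ↦ c n * (μ (s n)).toReal :=
    .of_nonneg_of_le (fun n ↦ mul_nonneg (hc n) ENNReal.toReal_nonneg)
      (fun n ↦ mul_le_mul_of_nonneg_left
        (ENNReal.toReal_mono (measure_ne_top μ _) (measure_mono (subset_univ _))) (hc n))
      (hc_sum.mul_right _)
  have hpoint : ∀ y,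
      ENNReal.ofReal ‖f y‖ ≤ ∑' n, (s n).indicator (fun _ ↦ ENNReal.ofReal (c n)) y := by
    intro y
    obtain ⟨n, hn, hfn⟩ := hf y
    calc ENNReal.ofReal ‖f y‖ ≤ (s n).indicator (fun _ ↦ ENNReal.ofReal (c n)) y := by
          rw [indicator_of_mem hn]; exact ENNReal.ofReal_le_ofReal hfn
      _ ≤ _ := ENNReal.le_tsum n
  refine (norm_integral_le_lintegral_norm f).trans (ENNReal.toReal_le_of_le_ofReal
    (tsum_nonneg fun n ↦ mul_nonneg (hc n) ENNReal.toReal_nonneg) ?_)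
  calc ∫⁻ y, ENNReal.ofReal ‖f y‖ ∂μ
      ≤ ∫⁻ y, ∑' n, (s n).indicator (fun _ ↦ ENNReal.ofReal (c n)) y ∂μ :=
        lintegral_mono hpoint
    _ = ∑' n, ENNReal.ofReal (c n) * μ (s n) := by
        rw [lintegral_tsum fun n ↦ (measurable_const.indicator (hs n)).aemeasurable]
        simp only [lintegral_indicator_const (hs _)]
    _ = ∑' n, ENNReal.ofReal (c n * (μ (s n)).toReal) := by
        simp only [ENNReal.ofReal_mul (hc _), ENNReal.ofReal_toReal (measure_ne_top μ _)]
    _ = ENNReal.ofReal (∑' n, c n * (μ (s n)).toReal) := by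
        rw [ENNReal.ofReal_tsum_of_nonneg (fun n ↦ mul_nonneg (hc n) ENNReal.toReal_nonneg) hsum]

theorem exists_two_pow_mul_le_max_and_lt {a ε : ℝ} (hε : 0 < ε) :
    ∃ n : ℕ, 2 ^ n * ε ≤ max ε a ∧ a < 2 ^ (n + 1) * ε := by
  rcases lt_or_ge a ε with ha | ha
  · exact ⟨0, by simp, by norm_num; linarith⟩
  · obtain ⟨n, hn, hn'⟩ := exists_nat_pow_near ((one_le_div hε).mpr ha) one_lt_two
    refine ⟨n, ?_, (div_lt_iff₀ hε).mp hn'⟩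
    exact ((le_div_iff₀ hε).mp hn).trans (le_max_right _ _)

theorem exists_mem_Ioo_and_norm_inv_sub_le (x y : ℝ) {ε : ℝ} (hε : 0 < ε) :
    ∃ n : ℕ, y ∈ Ioo (x - 2 ^ (n + 1) * ε) (x + 2 ^ (n + 1) * ε) ∧
      ‖((y : ℂ) - (x + ε * Complex.I))⁻¹‖ ≤ 2 / ε * (2 : ℝ) ^ (-(n : ℤ)) := by
  obtain ⟨n, hlow, hup⟩ := exists_two_pow_mul_le_max_and_lt (a := |y - x|) hε
  have hnorm : max ε |y - x| ≤ ‖(y : ℂ) - (x + ε * Complex.I)‖ := by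
    refine max_le ?_ ?_
    · simpa [abs_of_pos hε] using Complex.abs_im_le_norm ((y : ℂ) - (x + ε * Complex.I))
    · simpa using Complex.abs_re_le_norm ((y : ℂ) - (x + ε * Complex.I))
  refine ⟨n, ⟨by linarith [neg_abs_le (y - x)], by linarith [le_abs_self (y - x)]⟩, ?_⟩
  calc ‖((y : ℂ) - (x + ε * Complex.I))⁻¹‖ ≤ (2 ^ n * ε)⁻¹ := by
        rw [norm_inv]; exact inv_anti₀ (by positivity) (hlow.trans hnorm)
    _ ≤ 2 / ε * (2 : ℝ) ^ (-(n : ℤ)) := by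
        rw [zpow_neg, zpow_natCast, mul_inv, div_eq_mul_inv]
        have : 0 ≤ ((2 : ℝ) ^ n)⁻¹ * ε⁻¹ := by positivity
        linarith

theorem two_zpow_neg_mul_rpow (β ε : ℝ) (hε : 0 < ε) (n : ℕ) :
    (2 : ℝ) ^ (-(n : ℤ)) * ((2 : ℝ) ^ (n + 1) * ε) ^ β
      = (2 : ℝ) ^ β * ((2 : ℝ) ^ (β - 1)) ^ n * ε ^ β := by
  have h2 : (0 : ℝ) < 2 := two_pos
  rw [Real.mul_rpow (by positivity) hε.le, ← Real.rpow_natCast (2 : ℝ) (n + 1),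
    ← Real.rpow_intCast (2 : ℝ) (-(n : ℤ)), ← Real.rpow_natCast ((2 : ℝ) ^ (β - 1)) n,
    ← Real.rpow_mul h2.le, ← Real.rpow_mul h2.le, ← mul_assoc, ← Real.rpow_add h2,
    ← Real.rpow_add h2]
  congr 2
  push_cast
  ring

theorem tsum_two_zpow_neg_mul_le_of_le_rpow {m : ℝ → ℝ} {β Λ ε : ℝ} (hβ : β < 1)
    (hε : 0 < ε) (hm0 : ∀ δ, 0 ≤ m δ) (hm : ∀ δ, 0 < δ → m δ ≤ Λ * δ ^ β) :
    ∑' n : ℕ, (2 : ℝ) ^ (-(n : ℤ)) * m (2 ^ (n + 1) * ε)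
      ≤ Λ * 2 ^ β * ε ^ β * (1 - (2 : ℝ) ^ (β - 1))⁻¹ := by
  have hr0 : 0 ≤ (2 : ℝ) ^ (β - 1) := Real.rpow_nonneg zero_le_two _
  have hr1 : (2 : ℝ) ^ (β - 1) < 1 :=
    Real.rpow_lt_one_of_one_lt_of_neg one_lt_two (by linarith)
  have hbound : ∀ n : ℕ, (2 : ℝ) ^ (-(n : ℤ)) * m (2 ^ (n + 1) * ε)
      ≤ Λ * 2 ^ β * ε ^ β * ((2 : ℝ) ^ (β - 1)) ^ n := fun n ↦
    calc (2 : ℝ) ^ (-(n : ℤ)) * m (2 ^ (n + 1) * ε)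
        ≤ (2 : ℝ) ^ (-(n : ℤ)) * (Λ * (2 ^ (n + 1) * ε) ^ β) :=
          mul_le_mul_of_nonneg_left (hm _ (by positivity)) (by positivity)
      _ = Λ * 2 ^ β * ε ^ β * ((2 : ℝ) ^ (β - 1)) ^ n := by
          rw [mul_left_comm, two_zpow_neg_mul_rpow β ε hε n]; ring
  have hgeom := (summable_geometric_of_lt_one hr0 hr1).mul_left (Λ * 2 ^ β * ε ^ β)
  calc ∑' n : ℕ, (2 : ℝ) ^ (-(n : ℤ)) * m (2 ^ (n + 1) * ε)
      ≤ ∑' n : ℕ, Λ * 2 ^ β * ε ^ β * ((2 : ℝ) ^ (β - 1)) ^ n :=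
        (hgeom.of_nonneg_of_le (fun n ↦ mul_nonneg (by positivity) (hm0 _)) hbound).tsum_le_tsum
          hbound hgeom
    _ = Λ * 2 ^ β * ε ^ β * (1 - (2 : ℝ) ^ (β - 1))⁻¹ := by
        rw [tsum_mul_left, tsum_geometric_of_lt_one hr0 hr1]

theorem stmt_16_general (μ : Measure ℝ) [IsProbabilityMeasure μ] (β Λ : ℝ)
    (hβ1 : β < 1) (x : ℝ)
    (hM : ∀ δ : ℝ, 0 < δ → (μ (Set.Ioo (x - δ) (x + δ))).toReal ≤ Λ * δ ^ β) :
    ∀ ε : ℝ, 0 < ε →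
      ‖∫ y, ((y : ℂ) - (x + ε * Complex.I))⁻¹ ∂μ‖
          ≤ (2 / ε) * ∑' n : ℕ, (2 : ℝ) ^ (-(n : ℤ)) *
              (μ (Set.Ioo (x - 2 ^ (n + 1) * ε) (x + 2 ^ (n + 1) * ε))).toReal ∧
      (2 / ε) * ∑' n : ℕ, (2 : ℝ) ^ (-(n : ℤ)) *
            (μ (Set.Ioo (x - 2 ^ (n + 1) * ε) (x + 2 ^ (n + 1) * ε))).toReal
          ≤ Λ * (2 : ℝ) ^ ((2 : ℝ) + β) * (1 - (2 : ℝ) ^ (β - 1))⁻¹ * ε ^ (β - 1) := by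
  intro ε hε
  constructor
  · have hc_sum : Summable fun n : ℕ ↦ 2 / ε * (2 : ℝ) ^ (-(n : ℤ)) := by
      simpa [zpow_neg, zpow_natCast, ← inv_pow] using summable_geometric_two.mul_left (2 / ε)
    calc _ ≤ ∑' n : ℕ, 2 / ε * (2 : ℝ) ^ (-(n : ℤ)) *
          (μ (Set.Ioo (x - 2 ^ (n + 1) * ε) (x + 2 ^ (n + 1) * ε))).toReal :=
          norm_integral_le_tsum_mul_measure (fun _ ↦ measurableSet_Ioo) (fun _ ↦ by positivity)
            hc_sum fun y ↦ exists_mem_Ioo_and_norm_inv_sub_le x y hε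
      _ = _ := by simp only [mul_assoc, tsum_mul_left]
  · have hΛ : 0 ≤ Λ := by simpa using ENNReal.toReal_nonneg.trans (hM 1 one_pos)
    have hK : 0 ≤ (1 - (2 : ℝ) ^ (β - 1))⁻¹ := inv_nonneg.mpr
      (sub_nonneg.mpr (Real.rpow_le_one_of_one_le_of_nonpos one_le_two (by linarith)))
    have hsum := tsum_two_zpow_neg_mul_le_of_le_rpow
      (m := fun δ ↦ (μ (Ioo (x - δ) (x + δ))).toReal) hβ1 hε
      (fun _ ↦ ENNReal.toReal_nonneg) hM
    have hslack : 0 ≤ Λ * 2 ^ β * (1 - (2 : ℝ) ^ (β - 1))⁻¹ * ε ^ (β - 1) := by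
      positivity
    calc _ ≤ 2 / ε * (Λ * 2 ^ β * ε ^ β * (1 - (2 : ℝ) ^ (β - 1))⁻¹) := by
          gcongr
      _ = 2 * (Λ * 2 ^ β * (1 - (2 : ℝ) ^ (β - 1))⁻¹ * ε ^ (β - 1)) := by
          rw [Real.rpow_sub hε, Real.rpow_one]; field_simp
      _ ≤ 4 * (Λ * 2 ^ β * (1 - (2 : ℝ) ^ (β - 1))⁻¹ * ε ^ (β - 1)) := by linarith
      _ = _ := by
          rw [Real.rpow_add two_pos, Real.rpow_two]; ring

theorem stmt_16 (μ : Measure ℝ) [IsProbabilityMeasure μ] (β Λ : ℝ)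
    (hβ0 : 0 < β) (hβ1 : β < 1) (x : ℝ)
    (hM : ∀ δ : ℝ, 0 < δ → (μ (Set.Ioo (x - δ) (x + δ))).toReal ≤ Λ * δ ^ β) :
    ∀ ε : ℝ, 0 < ε →
      ‖∫ y, ((y : ℂ) - (x + ε * Complex.I))⁻¹ ∂μ‖
          ≤ (2 / ε) * ∑' n : ℕ, (2 : ℝ) ^ (-(n : ℤ)) *
              (μ (Set.Ioo (x - 2 ^ (n + 1) * ε) (x + 2 ^ (n + 1) * ε))).toReal ∧
      (2 / ε) * ∑' n : ℕ, (2 : ℝ) ^ (-(n : ℤ)) *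
            (μ (Set.Ioo (x - 2 ^ (n + 1) * ε) (x + 2 ^ (n + 1) * ε))).toReal
          ≤ Λ * (2 : ℝ) ^ ((2 : ℝ) + β) * (1 - (2 : ℝ) ^ (β - 1))⁻¹ * ε ^ (β - 1) :=
  stmt_16_general μ β Λ hβ1 x hM
end

section
/- Let μ be a finite Borel measure on ℝ and x ∈ supp μ. Then ε^{−1} P_μ(x+iε) → ∫ 1/(x−y)² dμ(y) as ε → 0⁺ (in [0,∞]), and this limit is strictly positive. -/
/-!
Since `ε⁻¹ · ε / ((y - x)² + ε²) = ((x - y)² + ε²)⁻¹`, the rescaled Poisson integral is the integral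
of a family of kernels that increases pointwise to `(x - y)⁻²` as `ε ↓ 0`, so the limit is given by
monotone convergence. The limit is positive because its integrand never vanishes and `μ ≠ 0`.
-/

open MeasureTheory Set Filter ENNReal Topology

theorem tendsto_lintegral_nhdsGT_of_antitoneOn {α ι : Type*} [MeasurableSpace α] {μ : Measure α}
    [LinearOrder ι] [TopologicalSpace ι] [OrderTopology ι] [DenselyOrdered ι] [NoMaxOrder ι]
    [FirstCountableTopology ι] {f : ι → α → ℝ≥0∞} {F : α → ℝ≥0∞} {c : ι}
    (hf : ∀ t ∈ Ioi c, AEMeasurable (f t) μ) (h_anti : ∀ a, AntitoneOn (f · a) (Ioi c))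
    (h_tendsto : ∀ a, Tendsto (f · a) (𝓝[>] c) (𝓝 (F a))) :
    Tendsto (fun t => ∫⁻ a, f t a ∂μ) (𝓝[>] c) (𝓝 (∫⁻ a, F a ∂μ)) := by
  have h_anti_int : AntitoneOn (fun t => ∫⁻ a, f t a ∂μ) (Ioi c) :=
    fun s hs t ht hst => lintegral_mono fun a => h_anti a hs ht hst
  have h_sSup := h_anti_int.tendsto_nhdsGT (OrderTop.bddAbove _)
  obtain ⟨u, hu_anti, hu_gt, hu_tendsto⟩ := exists_seq_strictAnti_tendsto_nhdsWithin c
  -- The limit along `𝓝[>] c` exists; identify it along the sequence `u` by monotone convergence.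
  have h_seq : Tendsto (fun n => ∫⁻ a, f (u n) a ∂μ) atTop (𝓝 (∫⁻ a, F a ∂μ)) :=
    lintegral_tendsto_of_tendsto_of_monotone (fun n => hf _ (hu_gt n))
      (ae_of_all _ fun a m n hmn => h_anti a (hu_gt n) (hu_gt m) (hu_anti.antitone hmn))
      (ae_of_all _ fun a => (h_tendsto a).comp hu_tendsto)
  rwa [tendsto_nhds_unique (h_sSup.comp hu_tendsto) h_seq] at h_sSup

theorem tendsto_lintegral_inv_ofReal_add_sq {α : Type*} [MeasurableSpace α] (μ : Measure α)
    {d : α → ℝ} (hd : Measurable d) :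
    Tendsto (fun ε : ℝ => ∫⁻ a, (ENNReal.ofReal (d a + ε ^ 2))⁻¹ ∂μ) (𝓝[>] 0)
      (𝓝 (∫⁻ a, (ENNReal.ofReal (d a))⁻¹ ∂μ)) := by
  refine tendsto_lintegral_nhdsGT_of_antitoneOn (fun ε _ => by fun_prop)
    (fun a s hs t ht hst => ?_) (fun a => ?_)
  · exact ENNReal.inv_le_inv.2 (ENNReal.ofReal_le_ofReal (by gcongr; exact le_of_lt hs))
  · have h_sq : Tendsto (fun ε : ℝ => d a + ε ^ 2) (𝓝[>] 0) (𝓝 (d a)) := by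
      have h_cont : Continuous fun ε : ℝ => d a + ε ^ 2 := by fun_prop
      exact (h_cont.tendsto' 0 (d a) (by simp)).mono_left nhdsWithin_le_nhds
    exact (ENNReal.tendsto_ofReal h_sq).inv

theorem lintegral_inv_ofReal_pos {α : Type*} [MeasurableSpace α] {μ : Measure α}
    {d : α → ℝ} (hd : Measurable d) (hμ : μ ≠ 0) :
    0 < ∫⁻ a, (ENNReal.ofReal (d a))⁻¹ ∂μ := by
  have h_support : Function.support (fun a => (ENNReal.ofReal (d a))⁻¹) = univ :=
    Function.support_eq_univ fun a => ENNReal.inv_ne_zero.2 ofReal_ne_top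
  rw [lintegral_pos_iff_support (by fun_prop), h_support]
  exact Measure.measure_univ_pos.2 hμ

theorem ofReal_inv_mul_ofReal_div_sq_add_sq {ε : ℝ} (hε : 0 < ε) (a : ℝ) :
    ENNReal.ofReal ε⁻¹ * ENNReal.ofReal (ε / (a ^ 2 + ε ^ 2)) =
      (ENNReal.ofReal (a ^ 2 + ε ^ 2))⁻¹ := by
  rw [← ENNReal.ofReal_mul (by positivity), ← ENNReal.ofReal_inv_of_pos (by positivity)]
  congr 1
  field_simp

theorem stmt_17_general (μ : Measure ℝ) (x : ℝ)
    (hx : ∀ δ : ℝ, 0 < δ → μ (Set.Ioo (x - δ) (x + δ)) ≠ 0) :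
    Filter.Tendsto
        (fun ε : ℝ => ENNReal.ofReal ε⁻¹ *
          ∫⁻ y, ENNReal.ofReal (ε / ((y - x) ^ 2 + ε ^ 2)) ∂μ)
        (nhdsWithin 0 (Set.Ioi 0))
        (nhds (∫⁻ y, (ENNReal.ofReal ((x - y) ^ 2))⁻¹ ∂μ)) ∧
      0 < ∫⁻ y, (ENNReal.ofReal ((x - y) ^ 2))⁻¹ ∂μ := by
  have hd : Measurable fun y : ℝ => (x - y) ^ 2 := by fun_prop
  have hμ : μ ≠ 0 := fun h => hx 1 one_pos (by simp [h])
  refine ⟨(tendsto_lintegral_inv_ofReal_add_sq μ hd).congr'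
    (eventuallyEq_nhdsWithin_of_eqOn fun ε hε => ?_), lintegral_inv_ofReal_pos hd hμ⟩
  rw [← lintegral_const_mul' _ _ ofReal_ne_top]
  refine lintegral_congr fun y => ?_
  rw [ofReal_inv_mul_ofReal_div_sq_add_sq hε, sub_sq_comm]

/-- For `x` in the topological support of a finite measure `μ`,
`ε⁻¹ P_μ(x+iε) → ∫ (x-y)⁻² dμ(y)` as `ε → 0⁺` (in `[0,∞]`), and the limit is positive. -/
theorem stmt_17 (μ : Measure ℝ) [IsFiniteMeasure μ] (x : ℝ)
    (hx : ∀ δ : ℝ, 0 < δ → μ (Set.Ioo (x - δ) (x + δ)) ≠ 0) :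
    Filter.Tendsto
        (fun ε : ℝ => ENNReal.ofReal ε⁻¹ *
          ∫⁻ y, ENNReal.ofReal (ε / ((y - x) ^ 2 + ε ^ 2)) ∂μ)
        (nhdsWithin 0 (Set.Ioi 0))
        (nhds (∫⁻ y, (ENNReal.ofReal ((x - y) ^ 2))⁻¹ ∂μ)) ∧
      0 < ∫⁻ y, (ENNReal.ofReal ((x - y) ^ 2))⁻¹ ∂μ :=
  stmt_17_general μ x hx
end
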